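/- arXiv:1809.02937 — 2 statements merged into one kernel-verified Lean document; each statement's English description precedes it below -/
import Mathlib

section
/- Let $1 \le p_0 < q_0 \le \infty$, $p_0 < s < q_0$. Let $T$ be a sublinear operator bounded on $L^p(\mathbb{R})$ for all $p_0 < p < q_0$, with unweighted norm satisfying $\|T\|_{L^p\to L^p} \ge c\,p$ for all large $p$ (as for the Rubio de Francia square function with $p_0=2$, $q_0=\infty$, where $\|T\|_{L^p\to L^p}\simeq p$). If for all $w \in A_{s/2}$ one has $\|T\|_{L^s(w)\to L^s(w)} \le C[w]_{A_{s/2}}^{\beta}$, then $\beta \ge 1$. -/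
/-!
Suppose `β < 1`. For `p ≥ 2 s` and `q = (p / s)'`, duality writes `‖T f‖_p ^ s` as
`∫ |T f| ^ s h` with `‖h‖_q = 1`. The Rubio de Francia iteration `∑ (2K)^{-j} M^j h` of a
maximal operator `M` of norm `K` on `L^q` gives a weight `w ≥ h` with `‖w‖_q ≤ 2` and
`M w ≤ 2 K w`, so `w ∈ A_1 ⊆ A_{s/2}` with constant `≲ K ≲ 1 / (q - 1) ≤ p / s`. The weighted
bound and Hölder then give `‖T‖_{L^p → L^p} ≲ C p ^ β`, which contradicts `‖T‖ ≥ c p` for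
large `p`. For `M` we take the sum of the dyadic maximal operators of the standard grid and of
the grid shifted by a third, which controls the averages over all intervals.
-/

open MeasureTheory Set ENNReal

/-- The Muckenhoupt `A_r` characteristic of a weight `w` on `ℝ`,
`sup_I ⟨w⟩_I (⟨w^{1-r'}⟩_I)^{r-1}` over bounded intervals (note `1 - r' = -1/(r-1)`). -/
noncomputable def muckenhouptConst (r : ℝ) (w : ℝ → ℝ) : ℝ≥0∞ :=
  ⨆ (a : ℝ) (b : ℝ) (_ : a < b),
    ((ENNReal.ofReal (b - a))⁻¹ * ∫⁻ y in Set.Icc a b, ENNReal.ofReal (w y)) *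
      ((ENNReal.ofReal (b - a))⁻¹ *
        ∫⁻ y in Set.Icc a b, ENNReal.ofReal (w y ^ (-(1 : ℝ) / (r - 1)))) ^ (r - 1)

/-- Weighted `L^p(w)` norm. -/
noncomputable def weightedNorm (p : ℝ) (w : ℝ → ℝ) (f : ℝ → ℂ) : ℝ≥0∞ :=
  (∫⁻ x, (‖f x‖₊ : ℝ≥0∞) ^ p * ENNReal.ofReal (w x)) ^ (1 / p)

open Filter Topology

lemma two_rpow_neg_le {δ : ℝ} (hδ0 : 0 ≤ δ) (hδ1 : δ ≤ 1) : (2 : ℝ) ^ (-δ) ≤ 1 - δ / 2 := by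
  have := rpow_one_add_le_one_add_mul_self (s := -1 / 2) (by norm_num) hδ0 hδ1
  rw [Real.rpow_neg zero_le_two, ← Real.inv_rpow zero_le_two]
  norm_num at this ⊢
  linarith

lemma inv_one_sub_two_rpow_neg_le {δ : ℝ} (hδ0 : 0 < δ) (hδ1 : δ ≤ 1) :
    (1 - (2 : ℝ≥0∞) ^ (-δ))⁻¹ ≤ ENNReal.ofReal (2 / δ) := by
  rw [ENNReal.inv_le_iff_inv_le, ← ENNReal.ofReal_inv_of_pos (by positivity), inv_div,
    ← ENNReal.ofReal_ofNat 2, ENNReal.ofReal_rpow_of_pos two_pos, ← ENNReal.ofReal_one,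
    ← ENNReal.ofReal_sub _ (by positivity)]
  exact ENNReal.ofReal_le_ofReal (by linarith [two_rpow_neg_le hδ0.le hδ1])

lemma tsum_ite_two_rpow_lt_le {δ : ℝ} (hδ0 : 0 < δ) (hδ1 : δ ≤ 1) (y : ℝ≥0∞) :
    ∑' i : ℤ, (if (2 : ℝ≥0∞) ^ (i : ℝ) < y then (2 : ℝ≥0∞) ^ ((i : ℝ) * δ) else 0) ≤
      ENNReal.ofReal (2 / δ) * y ^ δ := by
  rcases eq_or_ne y 0 with rfl | hy0
  · simp
  rcases eq_or_ne y ⊤ with rfl | hyt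
  · rw [ENNReal.top_rpow_of_pos hδ0, ENNReal.mul_top (by simp [hδ0])]
    exact le_top
  obtain ⟨J, hJ₁, hJ₂⟩ := ENNReal.exists_mem_Ico_zpow hy0 hyt ENNReal.one_lt_two
    ENNReal.ofNat_ne_top
  rw [← ENNReal.rpow_intCast] at hJ₁ hJ₂
  have hinj : Function.Injective fun n : ℕ => J - n := fun m n h => by simpa using h
  calc ∑' i : ℤ, (if (2 : ℝ≥0∞) ^ (i : ℝ) < y then (2 : ℝ≥0∞) ^ ((i : ℝ) * δ) else 0)
      ≤ ∑' i : ℤ, (if i ≤ J then (2 : ℝ≥0∞) ^ ((i : ℝ) * δ) else 0) :=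
        ENNReal.tsum_le_tsum fun i => by
          split_ifs with h₁ h₂
          · exact le_rfl
          · have hJi : ((J + 1 : ℤ) : ℝ) ≤ i := by exact_mod_cast (by omega : J + 1 ≤ i)
            exact absurd (h₁.trans hJ₂)
              (ENNReal.rpow_le_rpow_of_exponent_le (by norm_num) hJi).not_gt
          · exact bot_le
          · exact le_rfl
    _ = ∑' n : ℕ, (2 : ℝ≥0∞) ^ ((J : ℝ) * δ) * ((2 : ℝ≥0∞) ^ (-δ)) ^ n := by
        rw [← hinj.tsum_eq fun i hi => ?_]
        · congr 1 with n
          rw [if_pos (by omega), ← ENNReal.rpow_natCast, ← ENNReal.rpow_mul,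
            ← ENNReal.rpow_add _ _ two_ne_zero ENNReal.ofNat_ne_top]
          push_cast
          ring_nf
        · have hiJ : i ≤ J := by_contra fun h => hi (if_neg h)
          exact ⟨(J - i).toNat, show J - ((J - i).toNat : ℤ) = i by omega⟩
    _ = (2 : ℝ≥0∞) ^ ((J : ℝ) * δ) * (1 - (2 : ℝ≥0∞) ^ (-δ))⁻¹ := by
        rw [ENNReal.tsum_mul_left, ENNReal.tsum_geometric]
    _ ≤ y ^ δ * ENNReal.ofReal (2 / δ) := by
        gcongr
        · rw [ENNReal.rpow_mul]
          exact ENNReal.rpow_le_rpow hJ₁ hδ0.le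
        · exact inv_one_sub_two_rpow_neg_le hδ0 hδ1
    _ = ENNReal.ofReal (2 / δ) * y ^ δ := mul_comm _ _

lemma rpow_le_tsum_ite_two_rpow_le {q : ℝ} (hq : 0 < q) (y : ℝ≥0∞) :
    y ^ q ≤ ∑' j : ℤ,
      if (2 : ℝ≥0∞) ^ (j : ℝ) ≤ y then (2 : ℝ≥0∞) ^ (((j : ℝ) + 1) * q) else 0 := by
  rcases eq_or_ne y 0 with rfl | hy0
  · simp [ENNReal.zero_rpow_of_pos hq]
  rcases eq_or_ne y ⊤ with rfl | hyt
  · rw [ENNReal.top_rpow_of_pos hq]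
    calc (⊤ : ℝ≥0∞) = ∑' _ : ℕ, 1 := (ENNReal.tsum_const_eq_top_of_ne_zero one_ne_zero).symm
      _ ≤ ∑' n : ℕ, if (2 : ℝ≥0∞) ^ ((n : ℤ) : ℝ) ≤ ⊤ then
            (2 : ℝ≥0∞) ^ ((((n : ℤ) : ℝ) + 1) * q) else 0 :=
          ENNReal.tsum_le_tsum fun n => by
            rw [if_pos le_top]
            exact ENNReal.one_le_rpow (by norm_num) (by positivity)
      _ ≤ _ := ENNReal.tsum_comp_le_tsum_of_injective Nat.cast_injective
          (fun j : ℤ => if (2 : ℝ≥0∞) ^ (j : ℝ) ≤ ⊤ then (2 : ℝ≥0∞) ^ (((j : ℝ) + 1) * q) else 0)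
  obtain ⟨J, hJ₁, hJ₂⟩ := ENNReal.exists_mem_Ico_zpow hy0 hyt ENNReal.one_lt_two
    ENNReal.ofNat_ne_top
  rw [← ENNReal.rpow_intCast] at hJ₁ hJ₂
  calc y ^ q ≤ (2 ^ ((J : ℝ) + 1)) ^ q := by
        gcongr
        exact_mod_cast hJ₂.le
    _ = if (2 : ℝ≥0∞) ^ (J : ℝ) ≤ y then (2 : ℝ≥0∞) ^ (((J : ℝ) + 1) * q) else 0 := by
        rw [if_pos hJ₁, ENNReal.rpow_mul]
    _ ≤ _ := ENNReal.le_tsum (f := fun j : ℤ =>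
          if (2 : ℝ≥0∞) ^ (j : ℝ) ≤ y then (2 : ℝ≥0∞) ^ (((j : ℝ) + 1) * q) else 0) J

lemma tsum_two_rpow_mul_ite_lt_le {q : ℝ} (hq1 : 1 < q) (hq2 : q ≤ 2) (y : ℝ≥0∞) :
    ∑' j : ℤ, (2 : ℝ≥0∞) ^ (((j : ℝ) + 1) * q) * 2 ^ (2 - (j : ℝ)) *
        (if (2 : ℝ≥0∞) ^ ((j : ℝ) - 2) < y then y else 0) ≤
      ENNReal.ofReal (128 / (q - 1)) * y ^ q := by
  have hδ0 : 0 < q - 1 := by linarith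
  have hterm (j : ℤ) : (2 : ℝ≥0∞) ^ (((j : ℝ) + 1) * q) * 2 ^ (2 - (j : ℝ)) *
      (if (2 : ℝ≥0∞) ^ ((j : ℝ) - 2) < y then y else 0) = 2 ^ (3 * q) * y *
      (if (2 : ℝ≥0∞) ^ (((j - 2 : ℤ) : ℝ)) < y then 2 ^ (((j - 2 : ℤ) : ℝ) * (q - 1)) else 0) := by
    have e : (2 : ℝ≥0∞) ^ (((j : ℝ) + 1) * q) * 2 ^ (2 - (j : ℝ)) =
        2 ^ (3 * q) * 2 ^ (((j : ℝ) - 2) * (q - 1)) := by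
      rw [← ENNReal.rpow_add _ _ two_ne_zero ENNReal.ofNat_ne_top,
        ← ENNReal.rpow_add _ _ two_ne_zero ENNReal.ofNat_ne_top]
      ring_nf
    push_cast
    split_ifs
    · rw [e]; ring
    · simp
  calc _ = 2 ^ (3 * q) * y * ∑' i : ℤ,
        (if (2 : ℝ≥0∞) ^ (i : ℝ) < y then (2 : ℝ≥0∞) ^ ((i : ℝ) * (q - 1)) else 0) := by
        rw [tsum_congr hterm, ENNReal.tsum_mul_left]
        exact congrArg _ ((Equiv.subRight (2 : ℤ)).tsum_eq
          fun i : ℤ => if (2 : ℝ≥0∞) ^ (i : ℝ) < y then (2 : ℝ≥0∞) ^ ((i : ℝ) * (q - 1)) else 0)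
    _ ≤ 2 ^ (6 : ℝ) * y * (ENNReal.ofReal (2 / (q - 1)) * y ^ (q - 1)) := by
        gcongr
        · norm_num
        · linarith
        · exact tsum_ite_two_rpow_lt_le hδ0 (by linarith) y
    _ = ENNReal.ofReal (128 / (q - 1)) * y ^ q := by
        have hq : y ^ q = y * y ^ (q - 1) := by
          conv_lhs => rw [show q = 1 + (q - 1) by ring]
          rw [ENNReal.rpow_add_of_nonneg _ _ zero_le_one hδ0.le, ENNReal.rpow_one]
        have h64 : (2 : ℝ≥0∞) ^ (6 : ℝ) * ENNReal.ofReal (2 / (q - 1)) =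
            ENNReal.ofReal (128 / (q - 1)) := by
          rw [show (2 : ℝ≥0∞) ^ (6 : ℝ) = ENNReal.ofReal 64 by norm_num,
            ← ENNReal.ofReal_mul (by norm_num)]
          ring_nf
        rw [hq, ← h64]
        ring

lemma conjExponent_le_two {r : ℝ} (hr : 2 ≤ r) : r.conjExponent ≤ 2 := by
  rw [Real.conjExponent, div_le_iff₀ (by linarith)]
  linarith

lemma conjExponent_sub_one_mul {r : ℝ} (hr : 1 < r) : (r.conjExponent - 1) * (r - 1) = 1 := by
  rw [Real.conjExponent]
  field_simp [(by linarith : r - 1 ≠ 0)]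
  ring

lemma rpow_le_of_le_mul_rpow {I X : ℝ≥0∞} {a b : ℝ} (hab : a + b = 1) (h0 : I ≠ 0) (ht : I ≠ ⊤)
    (h : I ≤ X * I ^ b) : I ^ a ≤ X := by
  have hb0 : I ^ b ≠ 0 := (ENNReal.rpow_pos (pos_iff_ne_zero.mpr h0) ht).ne'
  refine (ENNReal.mul_le_mul_iff_left hb0 (ENNReal.rpow_ne_top_of_ne_zero h0 ht)).mp ?_
  rwa [← ENNReal.rpow_add _ _ h0 ht, hab, ENNReal.rpow_one]

section Lq

variable {α : Type*} [MeasurableSpace α] {μ : Measure α}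

lemma iSup_rpow_of_pos {ι : Sort*} {r : ℝ} (hr : 0 < r) (g : ι → ℝ≥0∞) :
    (⨆ i, g i) ^ r = ⨆ i, g i ^ r :=
  Monotone.map_iSup_of_continuousAt ENNReal.continuous_rpow_const.continuousAt
    (ENNReal.monotone_rpow_of_nonneg hr.le) (ENNReal.zero_rpow_of_pos hr)

lemma eLpNorm'_const_mul {q : ℝ} (hq : 0 < q) {c : ℝ≥0∞} (hc : c ≠ ⊤) (h : α → ℝ≥0∞) :
    eLpNorm' (fun x => c * h x) q μ = c * eLpNorm' h q μ := by
  simp only [eLpNorm'_eq_lintegral_enorm, enorm_eq_self]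
  simp_rw [ENNReal.mul_rpow_of_nonneg _ _ hq.le]
  rw [lintegral_const_mul' _ _ (ENNReal.rpow_ne_top_of_nonneg hq.le hc),
    ENNReal.mul_rpow_of_nonneg _ _ (by positivity), ← ENNReal.rpow_mul, mul_one_div_cancel hq.ne',
    ENNReal.rpow_one]

theorem eLpNorm'_tsum_le {H : ℕ → α → ℝ≥0∞} (hH : ∀ j, AEMeasurable (H j) μ) {q : ℝ}
    (hq : 1 ≤ q) : eLpNorm' (fun x => ∑' j, H j x) q μ ≤ ∑' j, eLpNorm' (H j) q μ := by
  have hq0 : 0 < q := zero_lt_one.trans_le hq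
  have hsup : eLpNorm' (fun x => ∑' j, H j x) q μ =
      ⨆ N, eLpNorm' (∑ j ∈ Finset.range N, H j) q μ := by
    simp only [eLpNorm'_eq_lintegral_enorm, enorm_eq_self, ENNReal.tsum_eq_iSup_nat,
      iSup_rpow_of_pos hq0]
    rw [lintegral_iSup' (fun N => (Finset.aemeasurable_fun_sum _ fun j _ => hH j).pow_const q)
      (.of_forall fun x M N hMN => ENNReal.rpow_le_rpow (by
        simpa only [Finset.sum_apply] using
          Finset.sum_le_sum_of_subset (Finset.range_subset_range.mpr hMN)) hq0.le),
      iSup_rpow_of_pos (by positivity)]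
    simp only [Finset.sum_apply]
  rw [hsup]
  refine iSup_le fun N => (eLpNorm'_sum_le (fun j _ => (hH j).aestronglyMeasurable) hq).trans ?_
  exact ENNReal.sum_le_tsum _

theorem lintegral_mul_le_eLpNorm'_mul_eLpNorm' {p q : ℝ} (hpq : p.HolderConjugate q)
    (f : α → ℝ≥0∞) {g : α → ℝ≥0∞} (hg : Measurable g) (hg_top : ∀ x, g x ≠ ⊤) :
    ∫⁻ x, f x * g x ∂μ ≤ eLpNorm' f p μ * eLpNorm' g q μ := by
  obtain ⟨ψ, hψm, hψle, hψ⟩ := exists_measurable_le_lintegral_eq μ fun x => f x * g x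
  calc ∫⁻ x, f x * g x ∂μ = ∫⁻ x, ψ x / g x * g x ∂μ := by
        rw [hψ]
        refine lintegral_congr fun x => ?_
        rcases eq_or_ne (g x) 0 with h0 | h0
        · have := hψle x
          simp_all
        · exact (ENNReal.div_mul_cancel h0 (hg_top x)).symm
    _ ≤ eLpNorm' (fun x => ψ x / g x) p μ * eLpNorm' g q μ :=
        ENNReal.lintegral_mul_le_Lp_mul_Lq μ hpq (hψm.div hg).aemeasurable hg.aemeasurable
    _ ≤ eLpNorm' f p μ * eLpNorm' g q μ := by
        gcongr
        simp only [eLpNorm'_eq_lintegral_enorm, enorm_eq_self]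
        gcongr with x
        · exact one_div_nonneg.mpr hpq.nonneg
        · exact hpq.nonneg
        · exact ENNReal.div_le_of_le_mul (hψle x)

theorem exists_norming_function (F : α → ℝ≥0∞) {s p q : ℝ} (hs : 0 < s)
    (hpq : (p / s).HolderConjugate q) (hI0 : ∫⁻ x, F x ^ p ∂μ ≠ 0) :
    ∃ g : α → ℝ≥0∞, Measurable g ∧ ∫⁻ x, g x ∂μ ≠ 0 ∧
      eLpNorm' g q μ = (∫⁻ x, F x ^ p ∂μ) ^ (1 / q) ∧
      ∫⁻ x, F x ^ p ∂μ ≤ ∫⁻ x, F x ^ s * g x ∂μ := by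
  have hp : 0 < p := by simpa [hs] using hpq.pos
  have hq : 0 < q := hpq.symm.pos
  have hexp : s / p + 1 / q = 1 := by
    simpa [inv_div, one_div] using hpq.inv_add_inv_eq_one
  obtain ⟨φ, hφm, hφle, hφ⟩ := exists_measurable_le_lintegral_eq μ fun x => F x ^ p
  have hgq (x : α) : (φ x ^ (1 / q)) ^ q = φ x := by
    rw [← ENNReal.rpow_mul, one_div_mul_cancel hq.ne', ENNReal.rpow_one]
  refine ⟨fun x => φ x ^ (1 / q), hφm.pow_const _, fun h => hI0 ?_, ?_, ?_⟩
  · rw [hφ, lintegral_eq_zero_iff hφm]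
    filter_upwards [(lintegral_eq_zero_iff (hφm.pow_const _)).mp h] with x hx
    rw [← hgq, show φ x ^ (1 / q) = 0 from hx, ENNReal.zero_rpow_of_pos hq, Pi.zero_apply]
  · simp only [eLpNorm'_eq_lintegral_enorm, enorm_eq_self, hgq, hφ]
  · rw [hφ]
    refine lintegral_mono fun x => ?_
    calc φ x = φ x ^ (s / p) * φ x ^ (1 / q) := by
          rw [← ENNReal.rpow_add_of_nonneg _ _ (by positivity) (by positivity), hexp,
            ENNReal.rpow_one]
      _ ≤ (F x ^ p) ^ (s / p) * φ x ^ (1 / q) := by gcongr; exact hφle x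
      _ = F x ^ s * φ x ^ (1 / q) := by rw [← ENNReal.rpow_mul, mul_div_cancel₀ _ hp.ne']

lemma lintegral_rpow_le_tsum_measure (μ : Measure α) {F : α → ℝ≥0∞} (hF : Measurable F) {q : ℝ}
    (hq : 0 < q) :
    ∫⁻ x, F x ^ q ∂μ ≤
      ∑' j : ℤ, (2 : ℝ≥0∞) ^ (((j : ℝ) + 1) * q) * μ {x | (2 : ℝ≥0∞) ^ (j : ℝ) ≤ F x} := by
  have hmeas (j : ℤ) : MeasurableSet {x | (2 : ℝ≥0∞) ^ (j : ℝ) ≤ F x} :=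
    measurableSet_le measurable_const hF
  calc ∫⁻ x, F x ^ q ∂μ
      ≤ ∫⁻ x, ∑' j : ℤ, {x | (2 : ℝ≥0∞) ^ (j : ℝ) ≤ F x}.indicator
          (fun _ => (2 : ℝ≥0∞) ^ (((j : ℝ) + 1) * q)) x ∂μ :=
        lintegral_mono fun x => by
          simpa only [indicator_apply, mem_ofPred_eq] using rpow_le_tsum_ite_two_rpow_le hq (F x)
    _ = _ := by
        rw [lintegral_tsum fun j => (measurable_const.indicator (hmeas j)).aemeasurable]
        simp_rw [lintegral_indicator_const (hmeas _)]

end Lq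

section RubioDeFrancia

variable {α : Type*} {A : (α → ℝ≥0∞) → α → ℝ≥0∞} {K : ℝ≥0∞} {g : α → ℝ≥0∞}

noncomputable def rubioDeFrancia (A : (α → ℝ≥0∞) → α → ℝ≥0∞) (K : ℝ≥0∞) (g : α → ℝ≥0∞)
    (x : α) : ℝ≥0∞ :=
  ∑' j : ℕ, (2 * K)⁻¹ ^ j * A^[j] g x

lemma pow_mul_iterate_le_rubioDeFrancia (A : (α → ℝ≥0∞) → α → ℝ≥0∞) (K : ℝ≥0∞)
    (g : α → ℝ≥0∞) (j : ℕ) (x : α) : (2 * K)⁻¹ ^ j * A^[j] g x ≤ rubioDeFrancia A K g x :=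
  ENNReal.le_tsum (f := fun j => (2 * K)⁻¹ ^ j * A^[j] g x) j

lemma le_rubioDeFrancia (A : (α → ℝ≥0∞) → α → ℝ≥0∞) (K : ℝ≥0∞) (g : α → ℝ≥0∞) (x : α) :
    g x ≤ rubioDeFrancia A K g x := by
  simpa using pow_mul_iterate_le_rubioDeFrancia A K g 0 x

variable [MeasurableSpace α] {μ : Measure α}

lemma measurable_iterate_apply (hA : ∀ h, Measurable h → Measurable (A h)) (hg : Measurable g)
    (j : ℕ) : Measurable (A^[j] g) := by
  induction j with
  | zero => exact hg
  | succ j ih => rw [Function.iterate_succ_apply']; exact hA _ ih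

lemma measurable_rubioDeFrancia (hA : ∀ h, Measurable h → Measurable (A h)) (hg : Measurable g) :
    Measurable (rubioDeFrancia A K g) :=
  .tsum fun j => (measurable_iterate_apply hA hg j).const_mul _

lemma apply_rubioDeFrancia_le (hK0 : K ≠ 0) (hKt : K ≠ ⊤)
    (hA : ∀ h, Measurable h → Measurable (A h))
    (hA_tsum : ∀ H : ℕ → α → ℝ≥0∞, (∀ j, Measurable (H j)) →
      ∀ x, A (fun y => ∑' j, H j y) x ≤ ∑' j, A (H j) x)
    (hA_mul : ∀ c, c ≠ ⊤ → ∀ h x, A (fun y => c * h y) x ≤ c * A h x)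
    (hg : Measurable g) (x : α) :
    A (rubioDeFrancia A K g) x ≤ 2 * K * rubioDeFrancia A K g x := by
  set c := (2 * K)⁻¹
  have hc : c ≠ ⊤ := ENNReal.inv_ne_top.mpr (mul_ne_zero two_ne_zero hK0)
  have h2Kc : 2 * K * c = 1 :=
    ENNReal.mul_inv_cancel (mul_ne_zero two_ne_zero hK0) (ENNReal.mul_ne_top (by simp) hKt)
  calc A (rubioDeFrancia A K g) x
      ≤ ∑' j, A (fun y => c ^ j * A^[j] g y) x :=
        hA_tsum _ (fun j => (measurable_iterate_apply hA hg j).const_mul _) x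
    _ ≤ ∑' j, c ^ j * A^[j + 1] g x := ENNReal.tsum_le_tsum fun j => by
        rw [Function.iterate_succ_apply']
        exact hA_mul _ (ENNReal.pow_ne_top hc) _ x
    _ = 2 * K * ∑' j, c ^ (j + 1) * A^[j + 1] g x := by
        rw [← ENNReal.tsum_mul_left]
        refine tsum_congr fun j => ?_
        calc c ^ j * A^[j + 1] g x = 2 * K * c * (c ^ j * A^[j + 1] g x) := by
              rw [h2Kc, one_mul]
          _ = _ := by ring
    _ ≤ 2 * K * rubioDeFrancia A K g x := by
        gcongr
        exact ENNReal.tsum_comp_le_tsum_of_injective (add_left_injective 1)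
          (fun j => c ^ j * A^[j] g x)

lemma eLpNorm'_iterate_le {q : ℝ} (hA : ∀ h, Measurable h → Measurable (A h))
    (hA_Lq : ∀ h, Measurable h → eLpNorm' (A h) q μ ≤ K * eLpNorm' h q μ) (hg : Measurable g)
    (j : ℕ) : eLpNorm' (A^[j] g) q μ ≤ K ^ j * eLpNorm' g q μ := by
  induction j with
  | zero => simp
  | succ j ih =>
    rw [Function.iterate_succ_apply', pow_succ', mul_assoc]
    exact (hA_Lq _ (measurable_iterate_apply hA hg j)).trans (by gcongr)

lemma eLpNorm'_rubioDeFrancia_le {q : ℝ} (hq : 1 ≤ q) (hK0 : K ≠ 0) (hKt : K ≠ ⊤)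
    (hA : ∀ h, Measurable h → Measurable (A h))
    (hA_Lq : ∀ h, Measurable h → eLpNorm' (A h) q μ ≤ K * eLpNorm' h q μ) (hg : Measurable g) :
    eLpNorm' (rubioDeFrancia A K g) q μ ≤ 2 * eLpNorm' g q μ := by
  have hcK : (2 * K)⁻¹ * K = 2⁻¹ := by
    rw [ENNReal.mul_inv (.inl two_ne_zero) (.inr hK0), mul_assoc, ENNReal.inv_mul_cancel hK0 hKt,
      mul_one]
  set c := (2 * K)⁻¹
  have hc : c ≠ ⊤ := ENNReal.inv_ne_top.mpr (mul_ne_zero two_ne_zero hK0)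
  calc eLpNorm' (rubioDeFrancia A K g) q μ
      ≤ ∑' j, eLpNorm' (fun x => c ^ j * A^[j] g x) q μ :=
        eLpNorm'_tsum_le (fun j => ((measurable_iterate_apply hA hg j).const_mul _).aemeasurable) hq
    _ = ∑' j, c ^ j * eLpNorm' (A^[j] g) q μ := tsum_congr fun j =>
        eLpNorm'_const_mul (zero_lt_one.trans_le hq) (ENNReal.pow_ne_top hc) _
    _ ≤ ∑' j, c ^ j * (K ^ j * eLpNorm' g q μ) :=
        ENNReal.tsum_le_tsum fun j => by gcongr; exact eLpNorm'_iterate_le hA hA_Lq hg j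
    _ = ∑' j : ℕ, 2⁻¹ ^ j * eLpNorm' g q μ := by simp_rw [← mul_assoc, ← mul_pow, hcK]
    _ = 2 * eLpNorm' g q μ := by
        rw [ENNReal.tsum_mul_right, ENNReal.tsum_geometric, ENNReal.one_sub_inv_two, inv_inv]

end RubioDeFrancia

namespace DyadicGrid

/-- `γ = false` is the standard dyadic grid; for `γ = true` the cells of side `2 ^ n` are shifted
by `(-1) ^ n * 2 ^ n / 3`. The alternating sign keeps the shifted grid nested, and at every scale
its endpoints stay `2 ^ n / 3` away from the standard ones (the one-third trick). -/
def offset (γ : Bool) (n : ℤ) : ℤ := if γ then (if Even n then 1 else -1) else 0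

noncomputable def endpoint (γ : Bool) (n k : ℤ) : ℝ := (k + offset γ n / 3 : ℝ) * 2 ^ n

noncomputable def cell (γ : Bool) (n k : ℤ) : Set ℝ := Icc (endpoint γ n k) (endpoint γ n (k + 1))

lemma offset_true (n : ℤ) : offset true n = 1 ∨ offset true n = -1 := by
  by_cases h : Even n <;> simp [offset, h]

lemma offset_add_one (γ : Bool) (n : ℤ) : offset γ (n + 1) = -offset γ n := by
  cases γ
  · rfl
  · by_cases h : Even n <;> simp [offset, h]

lemma endpoint_add_one_sub (γ : Bool) (n k : ℤ) :
    endpoint γ n (k + 1) - endpoint γ n k = 2 ^ n := by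
  simp only [endpoint]; push_cast; ring

lemma endpoint_mono (γ : Bool) (n : ℤ) : Monotone (endpoint γ n) := fun k k' hk => by
  have : (k : ℝ) ≤ k' := by exact_mod_cast hk
  unfold endpoint
  gcongr

lemma volume_cell (γ : Bool) (n k : ℤ) : volume (cell γ n k) = ENNReal.ofReal (2 ^ n) := by
  rw [cell, Real.volume_Icc, endpoint_add_one_sub]

lemma measurableSet_cell (γ : Bool) (n k : ℤ) : MeasurableSet (cell γ n k) := measurableSet_Icc

lemma exists_endpoint_le_lt (γ : Bool) (n : ℤ) (x : ℝ) :
    ∃ k, endpoint γ n k ≤ x ∧ x < endpoint γ n (k + 1) := by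
  have h2n : (0 : ℝ) < 2 ^ n := zpow_pos two_pos n
  refine ⟨⌊x / 2 ^ n - offset γ n / 3⌋, ?_, ?_⟩
  · have := Int.floor_le (x / 2 ^ n - offset γ n / 3)
    rw [endpoint, ← le_div_iff₀ h2n]
    linarith
  · have := Int.lt_floor_add_one (x / 2 ^ n - offset γ n / 3)
    rw [endpoint, ← div_lt_iff₀ h2n]
    push_cast
    linarith

lemma cell_subset_cell_add_one (γ : Bool) (n k : ℤ) :
    cell γ n k ⊆ cell γ (n + 1) ((k + offset γ n) / 2) := by
  have h2n : (0 : ℝ) < 2 ^ n := zpow_pos two_pos n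
  have hl : 2 * ((k + offset γ n) / 2) ≤ k + offset γ n ∧
      k + offset γ n ≤ 2 * ((k + offset γ n) / 2) + 1 := by omega
  obtain ⟨hl₁, hl₂⟩ : (2 * ((k + offset γ n) / 2 : ℤ) : ℝ) ≤ k + offset γ n ∧
      (k + offset γ n : ℝ) ≤ 2 * ((k + offset γ n) / 2 : ℤ) + 1 := by exact_mod_cast hl
  apply Icc_subset_Icc <;>
  · simp only [endpoint, offset_add_one, zpow_add_one₀ (two_ne_zero (α := ℝ))]
    push_cast
    nlinarith

lemma exists_cell_superset (γ : Bool) {n m : ℤ} (hnm : n ≤ m) (k : ℤ) :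
    ∃ k', cell γ n k ⊆ cell γ m k' := by
  induction m, hnm using Int.leInduction with
  | base => exact ⟨k, subset_rfl⟩
  | succ m _ ih =>
    obtain ⟨k', hk'⟩ := ih
    exact ⟨_, hk'.trans (cell_subset_cell_add_one γ m k')⟩

lemma volume_cell_inter_cell {γ : Bool} {n k k' : ℤ} (hk : k ≠ k') :
    volume (cell γ n k ∩ cell γ n k') = 0 := by
  wlog hlt : k < k' generalizing k k'
  · rw [inter_comm]
    exact this hk.symm (by omega)
  rw [cell, cell, Icc_inter_Icc, Real.volume_Icc, ENNReal.ofReal_eq_zero]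
  have := endpoint_mono γ n (show k + 1 ≤ k' by omega)
  exact sub_nonpos.mpr ((min_le_left _ _).trans (this.trans (le_max_right _ _)))

lemma dist_endpoint_false_endpoint_true (n k k' : ℤ) :
    2 ^ n / 3 ≤ |endpoint false n k - endpoint true n k'| := by
  have h2n : (0 : ℝ) < 2 ^ n := zpow_pos two_pos n
  have hm : (1 : ℝ) ≤ |((3 * (k - k') - offset true n : ℤ) : ℝ)| := by
    rw [← Int.cast_abs, ← Int.cast_one, Int.cast_le]
    apply Int.one_le_abs
    rcases offset_true n with h | h <;> omega
  have : endpoint false n k - endpoint true n k' =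
      ((3 * (k - k') - offset true n : ℤ) : ℝ) / 3 * 2 ^ n := by
    simp only [endpoint, offset]; push_cast; ring
  rw [this, abs_mul, abs_div, abs_of_pos h2n]
  nlinarith [abs_nonneg (3 : ℝ)]

lemma exists_cell_superset_of_forall_notMem {γ : Bool} {n : ℤ} {a b : ℝ}
    (h : ∀ k, endpoint γ n k ∉ Ioo a b) : ∃ k, Icc a b ⊆ cell γ n k := by
  obtain ⟨k, hk₁, hk₂⟩ := exists_endpoint_le_lt γ n a
  exact ⟨k, Icc_subset_Icc hk₁ (not_lt.mp fun hb => h (k + 1) ⟨hk₂, hb⟩)⟩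

lemma exists_cell_superset_Icc {a b : ℝ} (hab : a < b) :
    ∃ γ n k, Icc a b ⊆ cell γ n k ∧ (2 : ℝ) ^ n ≤ 6 * (b - a) := by
  obtain ⟨m, hm₁, hm₂⟩ := exists_mem_Ico_zpow (x := 3 * (b - a)) (by linarith) one_lt_two
  rw [zpow_add_one₀ two_ne_zero] at hm₂
  -- At scale `2 ^ (m + 1) > 3 (b - a)` at most one of the two grids has an endpoint in `(a, b)`.
  by_cases hfalse : ∃ k, endpoint false (m + 1) k ∈ Ioo a b
  · obtain ⟨k₀, hk₀⟩ := hfalse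
    suffices ∀ k, endpoint true (m + 1) k ∉ Ioo a b by
      obtain ⟨k, hk⟩ := exists_cell_superset_of_forall_notMem this
      exact ⟨true, m + 1, k, hk, by rw [zpow_add_one₀ two_ne_zero]; linarith⟩
    intro k hk
    have := dist_endpoint_false_endpoint_true (m + 1) k₀ k
    rw [zpow_add_one₀ two_ne_zero] at this
    have : |endpoint false (m + 1) k₀ - endpoint true (m + 1) k| < b - a :=
      abs_sub_lt_iff.mpr ⟨by linarith [hk₀.2, hk.1], by linarith [hk₀.1, hk.2]⟩
    linarith
  · rw [not_exists] at hfalse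
    obtain ⟨k, hk⟩ := exists_cell_superset_of_forall_notMem hfalse
    exact ⟨false, m + 1, k, hk, by rw [zpow_add_one₀ two_ne_zero]; linarith⟩

lemma volume_cell_ne_zero (γ : Bool) (n k : ℤ) : volume (cell γ n k) ≠ 0 := by
  simp [volume_cell, zpow_pos (two_pos (α := ℝ)) n]

lemma volume_cell_ne_top (γ : Bool) (n k : ℤ) : volume (cell γ n k) ≠ ⊤ := by
  simp [volume_cell]

lemma setLAverage_cell_add_const (γ : Bool) (n k : ℤ) (h : ℝ → ℝ≥0∞) (c : ℝ≥0∞) :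
    ⨍⁻ y in cell γ n k, h y + c ∂volume = (⨍⁻ y in cell γ n k, h y ∂volume) + c := by
  rw [setLAverage_eq, setLAverage_eq, lintegral_add_right _ measurable_const, setLIntegral_const,
    ENNReal.add_div, ENNReal.mul_div_cancel_right (volume_cell_ne_zero γ n k)
      (volume_cell_ne_top γ n k)]

lemma setLAverage_cell_le (γ : Bool) (n k : ℤ) (h : ℝ → ℝ≥0∞) :
    ⨍⁻ y in cell γ n k, h y ∂volume ≤ (∫⁻ y, h y) / ENNReal.ofReal (2 ^ n) := by
  rw [setLAverage_eq, volume_cell]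
  exact ENNReal.div_le_div_right (setLIntegral_le_lintegral _ _) _

noncomputable def maximal (γ : Bool) (h : ℝ → ℝ≥0∞) (x : ℝ) : ℝ≥0∞ :=
  ⨆ (n : ℤ) (k : ℤ), (cell γ n k).indicator (fun _ => ⨍⁻ y in cell γ n k, h y ∂volume) x

lemma measurable_maximal (γ : Bool) (h : ℝ → ℝ≥0∞) : Measurable (maximal γ h) :=
  .iSup fun n => .iSup fun k => measurable_const.indicator (measurableSet_cell γ n k)

lemma setLAverage_le_maximal {γ : Bool} {n k : ℤ} {x : ℝ} (hx : x ∈ cell γ n k)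
    (h : ℝ → ℝ≥0∞) : ⨍⁻ y in cell γ n k, h y ∂volume ≤ maximal γ h x := by
  refine le_trans (le_of_eq ?_) (le_iSup₂ (f := fun n k =>
    (cell γ n k).indicator (fun _ => ⨍⁻ y in cell γ n k, h y ∂volume) x) n k)
  rw [indicator_of_mem hx]

lemma maximal_le {γ : Bool} {h : ℝ → ℝ≥0∞} {x : ℝ} {c : ℝ≥0∞}
    (hc : ∀ n k, x ∈ cell γ n k → ⨍⁻ y in cell γ n k, h y ∂volume ≤ c) : maximal γ h x ≤ c := by
  refine iSup₂_le fun n k => ?_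
  by_cases hx : x ∈ cell γ n k
  · simpa [indicator_of_mem hx] using hc n k hx
  · simp [indicator_of_notMem hx]

lemma lt_maximal_iff {γ : Bool} {h : ℝ → ℝ≥0∞} {x : ℝ} {t : ℝ≥0∞} :
    t < maximal γ h x ↔ ∃ n k, x ∈ cell γ n k ∧ t < ⨍⁻ y in cell γ n k, h y ∂volume := by
  constructor
  · intro ht
    by_contra! H
    exact (maximal_le H).not_gt ht
  · rintro ⟨n, k, hx, ht⟩
    exact ht.trans_le (setLAverage_le_maximal hx h)

lemma maximal_mono {γ : Bool} {h h' : ℝ → ℝ≥0∞} (hh : h ≤ h') (x : ℝ) :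
    maximal γ h x ≤ maximal γ h' x :=
  maximal_le fun _ _ hx => (setLAverage_mono_ae _ (.of_forall hh)).trans
    (setLAverage_le_maximal hx h')

lemma maximal_add_const_le (γ : Bool) (h : ℝ → ℝ≥0∞) (c : ℝ≥0∞) (x : ℝ) :
    maximal γ (fun y => h y + c) x ≤ maximal γ h x + c :=
  maximal_le fun n k hx => by
    rw [setLAverage_cell_add_const]
    gcongr
    exact setLAverage_le_maximal hx h

lemma maximal_tsum_le (γ : Bool) {H : ℕ → ℝ → ℝ≥0∞} (hH : ∀ j, Measurable (H j)) (x : ℝ) :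
    maximal γ (fun y => ∑' j, H j y) x ≤ ∑' j, maximal γ (H j) x :=
  maximal_le fun n k hx => by
    rw [setLAverage_eq', lintegral_tsum fun j => (hH j).aemeasurable]
    exact ENNReal.tsum_le_tsum fun j => by
      rw [← setLAverage_eq']
      exact setLAverage_le_maximal hx (H j)

lemma maximal_const_mul_le (γ : Bool) {c : ℝ≥0∞} (hc : c ≠ ⊤) (h : ℝ → ℝ≥0∞) (x : ℝ) :
    maximal γ (fun y => c * h y) x ≤ c * maximal γ h x :=
  maximal_le fun n k hx => by
    rw [setLAverage_eq', lintegral_const_mul' _ _ hc, ← setLAverage_eq']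
    gcongr
    exact setLAverage_le_maximal hx h

def IsMaximalCell (γ : Bool) (P : ℤ → ℤ → Prop) (n k : ℤ) : Prop :=
  P n k ∧ ∀ m k', n < m → cell γ n k ⊆ cell γ m k' → ¬P m k'

lemma exists_isMaximalCell {γ : Bool} {P : ℤ → ℤ → Prop} {N : ℤ} (hN : ∀ n k, P n k → n < N)
    {n k : ℤ} (hnk : P n k) : ∃ m k', cell γ n k ⊆ cell γ m k' ∧ IsMaximalCell γ P m k' := by
  classical
  let Q : ℕ → Prop := fun j => ∃ k', cell γ n k ⊆ cell γ (n + j) k' ∧ P (n + j) k'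
  have hQ0 : Q 0 := ⟨k, by simpa using hnk⟩
  set j₀ := Nat.findGreatest Q (N - n).toNat
  obtain ⟨k', hsub, hP⟩ : Q j₀ := Nat.findGreatest_spec (Nat.zero_le _) hQ0
  refine ⟨n + j₀, k', hsub, hP, fun m k'' hm hsub' hP' => ?_⟩
  have hmN := hN m k'' hP'
  refine Nat.findGreatest_is_greatest (P := Q) (n := (N - n).toNat) (k := (m - n).toNat)
    (by omega) (by omega) ⟨k'', ?_⟩
  rw [show n + ((m - n).toNat : ℤ) = m by omega]
  exact ⟨hsub.trans hsub', hP'⟩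

lemma volume_inter_eq_zero_of_isMaximalCell {γ : Bool} {P : ℤ → ℤ → Prop} {n k m k' : ℤ}
    (h : IsMaximalCell γ P n k) (h' : IsMaximalCell γ P m k') (hne : (n, k) ≠ (m, k')) :
    volume (cell γ n k ∩ cell γ m k') = 0 := by
  wlog hnm : n ≤ m generalizing n k m k'
  · rw [inter_comm]
    exact this h' h hne.symm (by omega)
  obtain ⟨k'', hk''⟩ := exists_cell_superset γ hnm k
  rcases hnm.lt_or_eq with hlt | rfl
  · have hk : k'' ≠ k' := by
      rintro rfl
      exact h.2 m k'' hlt hk'' h'.1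
    exact measure_mono_null (inter_subset_inter_left _ hk'') (volume_cell_inter_cell hk)
  · exact volume_cell_inter_cell fun hk => hne (by rw [hk])

lemma two_zpow_lt_of_lt_setLAverage_cell {γ : Bool} {n k : ℤ} {h : ℝ → ℝ≥0∞} {t : ℝ≥0∞}
    (ht : t ≠ 0) (hI : ∫⁻ y, h y ≠ ⊤) (hlt : t < ⨍⁻ y in cell γ n k, h y ∂volume) :
    (2 : ℝ) ^ n < ((∫⁻ y, h y) / t).toReal := by
  have h2n : (0 : ℝ) < 2 ^ n := zpow_pos (two_pos (α := ℝ)) n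
  have := hlt.trans_le (setLAverage_cell_le γ n k h)
  rw [ENNReal.lt_div_iff_mul_lt (.inl (by simpa using h2n)) (.inl ENNReal.ofReal_ne_top),
    mul_comm, ← ENNReal.lt_div_iff_mul_lt (.inl ht) (.inr (by simpa using h2n))] at this
  rwa [← ENNReal.ofReal_lt_iff_lt_toReal h2n.le (ENNReal.div_ne_top hI ht)]

/-- Weak type `(1, 1)`: the maximal cells with average above `t` cover the level set and are
almost disjoint. -/
theorem mul_volume_lt_maximal_le (γ : Bool) (h : ℝ → ℝ≥0∞) (t : ℝ≥0∞) :
    t * volume {x | t < maximal γ h x} ≤ ∫⁻ x, h x := by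
  rcases eq_or_ne (∫⁻ x, h x) ⊤ with hI | hI
  · simp [hI]
  rcases eq_or_ne t 0 with rfl | ht
  · simp
  let P : ℤ → ℤ → Prop := fun n k => t < ⨍⁻ y in cell γ n k, h y ∂volume
  obtain ⟨N, hN⟩ := exists_nat_gt ((∫⁻ y, h y) / t).toReal
  have hP : ∀ n k, P n k → n < N := fun n k hnk => by
    have : (2 : ℝ) ^ n < 2 ^ (N : ℤ) := by
      rw [zpow_natCast]
      exact (two_zpow_lt_of_lt_setLAverage_cell ht hI hnk).trans
        (hN.trans (by exact_mod_cast Nat.lt_two_pow_self))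
    exact (zpow_lt_zpow_iff_right₀ _root_.one_lt_two).mp this
  let S := {p : ℤ × ℤ | IsMaximalCell γ P p.1 p.2}
  let C : S → Set ℝ := fun p => cell γ p.1.1 p.1.2
  have hcover : {x | t < maximal γ h x} ⊆ ⋃ p, C p := fun x hx => by
    obtain ⟨n, k, hx, hnk⟩ := lt_maximal_iff.mp hx
    obtain ⟨m, k', hsub, hmax⟩ := exists_isMaximalCell hP hnk
    exact mem_iUnion.mpr ⟨⟨(m, k'), hmax⟩, hsub hx⟩
  have hdisj : Pairwise (Function.onFun (AEDisjoint volume) C) := fun p p' hpp' =>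
    volume_inter_eq_zero_of_isMaximalCell (P := P) p.2 p'.2 (Subtype.coe_injective.ne hpp')
  calc t * volume {x | t < maximal γ h x}
      ≤ t * ∑' p, volume (C p) := by gcongr; exact (measure_mono hcover).trans (measure_iUnion_le _)
    _ = ∑' p, t * volume (C p) := ENNReal.tsum_mul_left.symm
    _ ≤ ∑' p, ∫⁻ y in C p, h y := ENNReal.tsum_le_tsum fun p => by
        rw [← measure_mul_setLAverage _ (volume_cell_ne_top γ _ _), mul_comm]
        gcongr
        exact p.2.1.le
    _ = ∫⁻ y in ⋃ p, C p, h y :=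
        (lintegral_iUnion₀ (fun p => (measurableSet_cell γ _ _).nullMeasurableSet) hdisj h).symm
    _ ≤ ∫⁻ y, h y := setLIntegral_le_lintegral _ _

lemma mul_volume_two_mul_lt_maximal_le (γ : Bool) {h : ℝ → ℝ≥0∞} (hh : Measurable h)
    (τ : ℝ≥0∞) : τ * volume {x | 2 * τ < maximal γ h x} ≤ ∫⁻ x in {x | τ < h x}, h x := by
  set h₁ := {x | τ < h x}.indicator h
  have hle : h ≤ fun y => h₁ y + τ := fun y => by
    by_cases hy : τ < h y
    · simp [h₁, indicator_of_mem (show y ∈ {x | τ < h x} from hy)]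
    · simpa [h₁, indicator_of_notMem (show y ∉ {x | τ < h x} from hy)] using hy
  have hsub : {x | 2 * τ < maximal γ h x} ⊆ {x | τ < maximal γ h₁ x} := fun x hx => by
    by_contra hx'
    refine (show 2 * τ < maximal γ h x from hx).not_ge (((maximal_mono hle x).trans
      (maximal_add_const_le γ h₁ τ x)).trans ?_)
    rw [two_mul]
    gcongr
    exact not_lt.mp hx'
  calc τ * volume {x | 2 * τ < maximal γ h x}
      ≤ τ * volume {x | τ < maximal γ h₁ x} := by gcongr
    _ ≤ ∫⁻ x, h₁ x := mul_volume_lt_maximal_le γ h₁ τ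
    _ = _ := lintegral_indicator (measurableSet_lt measurable_const hh) h

lemma volume_two_rpow_le_maximal_le (γ : Bool) {h : ℝ → ℝ≥0∞} (hh : Measurable h) (j : ℤ) :
    volume {x | (2 : ℝ≥0∞) ^ (j : ℝ) ≤ maximal γ h x} ≤
      2 ^ (2 - (j : ℝ)) * ∫⁻ x in {x | (2 : ℝ≥0∞) ^ ((j : ℝ) - 2) < h x}, h x := by
  set τ := (2 : ℝ≥0∞) ^ ((j : ℝ) - 2)
  have hτ0 : τ ≠ 0 := (ENNReal.rpow_pos two_pos ENNReal.ofNat_ne_top).ne'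
  have hτt : τ ≠ ⊤ := ENNReal.rpow_ne_top_of_ne_zero two_ne_zero ENNReal.ofNat_ne_top
  have hsub : {x | (2 : ℝ≥0∞) ^ (j : ℝ) ≤ maximal γ h x} ⊆ {x | 2 * τ < maximal γ h x} :=
    fun x hx => by
      refine lt_of_lt_of_le ?_ (show (2 : ℝ≥0∞) ^ (j : ℝ) ≤ maximal γ h x from hx)
      rw [show 2 * τ = 2 ^ ((j : ℝ) - 1) by rw [show (j : ℝ) - 1 = 1 + ((j : ℝ) - 2) by ring,
        ENNReal.rpow_add _ _ two_ne_zero ENNReal.ofNat_ne_top, ENNReal.rpow_one]]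
      exact ENNReal.rpow_lt_rpow_of_exponent_lt ENNReal.one_lt_two ENNReal.ofNat_ne_top
        (by linarith)
  rw [show (2 : ℝ≥0∞) ^ (2 - (j : ℝ)) = τ⁻¹ by rw [← ENNReal.rpow_neg, neg_sub],
    ← ENNReal.div_eq_inv_mul, ENNReal.le_div_iff_mul_le (.inl hτ0) (.inl hτt), mul_comm]
  calc τ * volume {x | (2 : ℝ≥0∞) ^ (j : ℝ) ≤ maximal γ h x}
      ≤ τ * volume {x | 2 * τ < maximal γ h x} := by gcongr
    _ ≤ _ := mul_volume_two_mul_lt_maximal_le γ hh τ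

theorem lintegral_maximal_rpow_le (γ : Bool) {h : ℝ → ℝ≥0∞} (hh : Measurable h) {q : ℝ}
    (hq1 : 1 < q) (hq2 : q ≤ 2) :
    ∫⁻ x, maximal γ h x ^ q ≤ ENNReal.ofReal (128 / (q - 1)) * ∫⁻ x, h x ^ q := by
  have hlev (j : ℤ) : MeasurableSet {x | (2 : ℝ≥0∞) ^ ((j : ℝ) - 2) < h x} :=
    measurableSet_lt measurable_const hh
  calc ∫⁻ x, maximal γ h x ^ q
      ≤ ∑' j : ℤ, (2 : ℝ≥0∞) ^ (((j : ℝ) + 1) * q) *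
          volume {x | (2 : ℝ≥0∞) ^ (j : ℝ) ≤ maximal γ h x} :=
        lintegral_rpow_le_tsum_measure volume (measurable_maximal γ h) (by linarith)
    _ ≤ ∑' j : ℤ, (2 : ℝ≥0∞) ^ (((j : ℝ) + 1) * q) * (2 ^ (2 - (j : ℝ)) *
          ∫⁻ x in {x | (2 : ℝ≥0∞) ^ ((j : ℝ) - 2) < h x}, h x) :=
        ENNReal.tsum_le_tsum fun j => by gcongr; exact volume_two_rpow_le_maximal_le γ hh j
    _ = ∫⁻ x, ∑' j : ℤ, (2 : ℝ≥0∞) ^ (((j : ℝ) + 1) * q) * 2 ^ (2 - (j : ℝ)) *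
          (if (2 : ℝ≥0∞) ^ ((j : ℝ) - 2) < h x then h x else 0) := by
        rw [lintegral_tsum fun j => ((Measurable.ite (hlev j) hh measurable_const).const_mul
          _).aemeasurable]
        refine tsum_congr fun j => ?_
        rw [lintegral_const_mul _ (Measurable.ite (hlev j) hh measurable_const),
          ← lintegral_indicator (hlev j), mul_assoc]
        simp only [indicator_apply, mem_ofPred_eq]
    _ ≤ ∫⁻ x, ENNReal.ofReal (128 / (q - 1)) * h x ^ q :=
        lintegral_mono fun x => tsum_two_rpow_mul_ite_lt_le hq1 hq2 (h x)
    _ = _ := lintegral_const_mul' _ _ ENNReal.ofReal_ne_top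

noncomputable def maximal₂ (h : ℝ → ℝ≥0∞) (x : ℝ) : ℝ≥0∞ := maximal false h x + maximal true h x

theorem eLpNorm'_maximal₂_le {h : ℝ → ℝ≥0∞} (hh : Measurable h) {q : ℝ} (hq1 : 1 < q)
    (hq2 : q ≤ 2) :
    eLpNorm' (maximal₂ h) q volume ≤ ENNReal.ofReal (256 / (q - 1)) * eLpNorm' h q volume := by
  have h1 : 1 ≤ ENNReal.ofReal (128 / (q - 1)) :=
    ENNReal.one_le_ofReal.mpr ((one_le_div (by linarith)).mpr (by linarith))
  have hγ (γ : Bool) : eLpNorm' (maximal γ h) q volume ≤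
      ENNReal.ofReal (128 / (q - 1)) * eLpNorm' h q volume := by
    simp only [eLpNorm'_eq_lintegral_enorm, enorm_eq_self]
    calc (∫⁻ x, maximal γ h x ^ q) ^ (1 / q)
        ≤ (ENNReal.ofReal (128 / (q - 1)) * ∫⁻ x, h x ^ q) ^ (1 / q) := by
          gcongr
          exact lintegral_maximal_rpow_le γ hh hq1 hq2
      _ = ENNReal.ofReal (128 / (q - 1)) ^ (1 / q) * (∫⁻ x, h x ^ q) ^ (1 / q) :=
          ENNReal.mul_rpow_of_nonneg _ _ (by positivity)
      _ ≤ ENNReal.ofReal (128 / (q - 1)) ^ (1 : ℝ) * (∫⁻ x, h x ^ q) ^ (1 / q) := by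
          gcongr
          exact (div_le_one (by linarith)).mpr hq1.le
      _ = ENNReal.ofReal (128 / (q - 1)) * (∫⁻ x, h x ^ q) ^ (1 / q) := by rw [ENNReal.rpow_one]
  calc eLpNorm' (maximal₂ h) q volume
      ≤ eLpNorm' (maximal false h) q volume + eLpNorm' (maximal true h) q volume :=
        eLpNorm'_add_le (measurable_maximal false h).aestronglyMeasurable
          (measurable_maximal true h).aestronglyMeasurable hq1.le
    _ ≤ _ := add_le_add (hγ false) (hγ true)
    _ = ENNReal.ofReal (256 / (q - 1)) * eLpNorm' h q volume := by
        rw [← two_mul, ← mul_assoc, ← ENNReal.ofReal_ofNat 2, ← ENNReal.ofReal_mul zero_le_two]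
        ring_nf

lemma maximal_le_maximal₂ (γ : Bool) (h : ℝ → ℝ≥0∞) (x : ℝ) : maximal γ h x ≤ maximal₂ h x := by
  cases γ
  · exact le_self_add
  · exact le_add_self

lemma setLAverage_Icc_le_maximal₂ {a b x : ℝ} (hab : a < b) (hx : x ∈ Icc a b)
    (h : ℝ → ℝ≥0∞) : ⨍⁻ y in Icc a b, h y ∂volume ≤ 6 * maximal₂ h x := by
  obtain ⟨γ, n, k, hsub, hsize⟩ := exists_cell_superset_Icc hab
  rw [setLAverage_eq, Real.volume_Icc,
    ENNReal.div_le_iff (by simpa using hab) ENNReal.ofReal_ne_top]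
  calc ∫⁻ y in Icc a b, h y
      ≤ ∫⁻ y in cell γ n k, h y := lintegral_mono_set hsub
    _ = volume (cell γ n k) * ⨍⁻ y in cell γ n k, h y ∂volume :=
        (measure_mul_setLAverage _ (volume_cell_ne_top γ n k)).symm
    _ ≤ ENNReal.ofReal (6 * (b - a)) * maximal₂ h x := by
        rw [volume_cell]
        gcongr
        exact (setLAverage_le_maximal (hsub hx) h).trans (maximal_le_maximal₂ γ h x)
    _ = 6 * maximal₂ h x * ENNReal.ofReal (b - a) := by
        rw [ENNReal.ofReal_mul (by norm_num), ENNReal.ofReal_ofNat]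
        ring

lemma maximal₂_pos {h : ℝ → ℝ≥0∞} (hh : ∫⁻ y, h y ≠ 0) (x : ℝ) : 0 < maximal₂ h x := by
  obtain ⟨n, hn⟩ : ∃ n : ℤ, ∫⁻ y in Icc (n : ℝ) (n + 1), h y ≠ 0 := by
    by_contra! H
    refine hh (le_antisymm ?_ bot_le)
    calc ∫⁻ y, h y = ∫⁻ y in ⋃ n : ℤ, Icc (n : ℝ) (n + 1), h y := by
          rw [iUnion_Icc_intCast, setLIntegral_univ]
      _ ≤ ∑' n : ℤ, ∫⁻ y in Icc (n : ℝ) (n + 1), h y := lintegral_iUnion_le _ _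
      _ = 0 := by simp [H]
  have hab : min (n : ℝ) x < max ((n : ℝ) + 1) x :=
    (min_le_left _ _).trans_lt ((lt_add_one _).trans_le (le_max_left _ _))
  have hpos : 0 < ⨍⁻ y in Icc (min (n : ℝ) x) (max ((n : ℝ) + 1) x), h y ∂volume := by
    rw [setLAverage_eq, ENNReal.div_pos_iff, Real.volume_Icc]
    refine ⟨fun h0 => hn (le_antisymm ?_ bot_le), ENNReal.ofReal_ne_top⟩
    exact h0 ▸ lintegral_mono_set (Icc_subset_Icc (min_le_left _ _) (le_max_left _ _))
  have := hpos.trans_le (setLAverage_Icc_le_maximal₂ hab ⟨min_le_right _ _, le_max_right _ _⟩ h)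
  exact pos_of_mul_pos_right this (by norm_num)

lemma measurable_maximal₂ (h : ℝ → ℝ≥0∞) : Measurable (maximal₂ h) :=
  (measurable_maximal false h).add (measurable_maximal true h)

lemma maximal₂_tsum_le {H : ℕ → ℝ → ℝ≥0∞} (hH : ∀ j, Measurable (H j)) (x : ℝ) :
    maximal₂ (fun y => ∑' j, H j y) x ≤ ∑' j, maximal₂ (H j) x := by
  simp only [maximal₂, ENNReal.tsum_add]
  exact add_le_add (maximal_tsum_le false hH x) (maximal_tsum_le true hH x)

lemma maximal₂_const_mul_le {c : ℝ≥0∞} (hc : c ≠ ⊤) (h : ℝ → ℝ≥0∞) (x : ℝ) :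
    maximal₂ (fun y => c * h y) x ≤ c * maximal₂ h x := by
  rw [maximal₂, maximal₂, mul_add]
  exact add_le_add (maximal_const_mul_le false hc h x) (maximal_const_mul_le true hc h x)

end DyadicGrid

open DyadicGrid

def IsA1Weight (Λ : ℝ≥0∞) (w : ℝ → ℝ≥0∞) : Prop :=
  ∀ a b : ℝ, a < b → ∀ᵐ x, x ∈ Icc a b → ⨍⁻ y in Icc a b, w y ∂volume ≤ Λ * w x

lemma IsA1Weight.mono {Λ Λ' : ℝ≥0∞} {w : ℝ → ℝ≥0∞} (hw : IsA1Weight Λ w) (hΛ : Λ ≤ Λ') :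
    IsA1Weight Λ' w := fun a b hab => (hw a b hab).mono fun _ hx hxI =>
  (hx hxI).trans (by gcongr)

lemma inv_mul_setLIntegral_Icc {a b : ℝ} (f : ℝ → ℝ≥0∞) :
    (ENNReal.ofReal (b - a))⁻¹ * ∫⁻ y in Icc a b, f y = ⨍⁻ y in Icc a b, f y ∂volume := by
  rw [setLAverage_eq, Real.volume_Icc, ENNReal.div_eq_inv_mul]

/-- On an interval where `w` has average `α`, `w ≥ α / Λ` almost everywhere, which bounds the
average of `w ^ (-1 / (r - 1))` by `(Λ / α) ^ (1 / (r - 1))`. -/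
theorem muckenhouptConst_le {r : ℝ} (hr : 1 < r) {w : ℝ → ℝ} (hw : ∀ x, 0 < w x) {Λ : ℝ≥0∞}
    (hA : IsA1Weight Λ fun x => ENNReal.ofReal (w x)) : muckenhouptConst r w ≤ Λ := by
  refine iSup_le fun a => iSup_le fun b => iSup_le fun hab => ?_
  rcases eq_or_ne Λ ⊤ with rfl | hΛ
  · exact le_top
  simp only [inv_mul_setLIntegral_Icc]
  set α := ⨍⁻ y in Icc a b, ENNReal.ofReal (w y) ∂volume
  have hα : ∀ᵐ x ∂volume.restrict (Icc a b), α ≤ Λ * ENNReal.ofReal (w x) :=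
    (ae_restrict_iff' measurableSet_Icc).mpr (hA a b hab)
  rcases eq_or_ne α 0 with h0 | h0
  · rw [h0, zero_mul]
    exact bot_le
  have hαt : α ≠ ⊤ := by
    have : (ae (volume.restrict (Icc a b))).NeBot := ae_restrict_neBot.mpr (by simpa using hab)
    obtain ⟨x, hx⟩ := hα.exists
    exact ne_top_of_le_ne_top (ENNReal.mul_ne_top hΛ ENNReal.ofReal_ne_top) hx
  set τ := 1 / (r - 1)
  have hdual : ∀ᵐ y ∂volume.restrict (Icc a b),
      ENNReal.ofReal (w y ^ (-(1 : ℝ) / (r - 1))) ≤ (Λ / α) ^ τ := by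
    filter_upwards [hα] with y hy
    rw [neg_div, ← ENNReal.ofReal_rpow_of_pos (hw y), ENNReal.rpow_neg, ← ENNReal.inv_rpow]
    gcongr
    rw [ENNReal.le_div_iff_mul_le (.inl h0) (.inl hαt), ← ENNReal.div_eq_inv_mul]
    exact ENNReal.div_le_of_le_mul hy
  calc α * (⨍⁻ y in Icc a b, ENNReal.ofReal (w y ^ (-(1 : ℝ) / (r - 1))) ∂volume) ^ (r - 1)
      ≤ α * (⨍⁻ _ in Icc a b, (Λ / α) ^ τ ∂volume) ^ (r - 1) := by
        gcongr α * ?_ ^ _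
        exact laverage_mono_ae hdual
    _ = α * (Λ / α) := by
        rw [setLAverage_const (by simpa using hab) (by simp), ← ENNReal.rpow_mul,
          one_div_mul_cancel (by linarith), ENNReal.rpow_one]
    _ = Λ := ENNReal.mul_div_cancel h0 hαt

lemma IsA1Weight.congr_ae {Λ : ℝ≥0∞} {v w : ℝ → ℝ≥0∞} (hv : IsA1Weight Λ v)
    (hwv : w =ᵐ[volume] v) : IsA1Weight Λ w := fun a b hab => by
  filter_upwards [hv a b hab, hwv] with x hx hxv hxI
  rw [setLAverage_congr_fun_ae measurableSet_Icc (hwv.mono fun y hy _ => hy), hxv]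
  exact hx hxI

lemma isA1Weight_of_maximal₂_le {Λ : ℝ≥0∞} {w : ℝ → ℝ≥0∞} (hw : ∀ x, maximal₂ w x ≤ Λ * w x) :
    IsA1Weight (6 * Λ) w := fun a b hab => .of_forall fun x hx =>
  (setLAverage_Icc_le_maximal₂ hab hx w).trans (by rw [mul_assoc]; gcongr; exact hw x)

/-- The Rubio de Francia weight built from `maximal₂`, modified on the null set where it is
infinite. Its constant is `6 * 2K`, where `K = 256 / (q - 1)` bounds `maximal₂` on `L^q`. -/
theorem exists_isA1Weight {q : ℝ} (hq1 : 1 < q) (hq2 : q ≤ 2) {g : ℝ → ℝ≥0∞} (hg : Measurable g)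
    (hg0 : ∫⁻ x, g x ≠ 0) (hgq : eLpNorm' g q volume ≠ ⊤) :
    ∃ w : ℝ → ℝ≥0∞, Measurable w ∧ (∀ x, w x ≠ 0) ∧ (∀ x, w x ≠ ⊤) ∧ g ≤ᵐ[volume] w ∧
      eLpNorm' w q volume ≤ 2 * eLpNorm' g q volume ∧
      IsA1Weight (ENNReal.ofReal (3072 / (q - 1))) w := by
  set K := ENNReal.ofReal (256 / (q - 1))
  have hK0 : K ≠ 0 := by simpa [K] using hq1
  have hKt : K ≠ ⊤ := ENNReal.ofReal_ne_top
  have hm : ∀ h, Measurable h → Measurable (maximal₂ h) := fun h _ => measurable_maximal₂ h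
  set v := rubioDeFrancia maximal₂ K g
  have hvm : Measurable v := measurable_rubioDeFrancia hm hg
  have hvq : eLpNorm' v q volume ≤ 2 * eLpNorm' g q volume :=
    eLpNorm'_rubioDeFrancia_le hq1.le hK0 hKt hm (fun h hh => eLpNorm'_maximal₂_le hh hq1 hq2) hg
  have hvA : IsA1Weight (ENNReal.ofReal (3072 / (q - 1))) v := by
    convert isA1Weight_of_maximal₂_le fun x => apply_rubioDeFrancia_le hK0 hKt hm
      (fun _ hH => maximal₂_tsum_le hH) (fun _ hc => maximal₂_const_mul_le hc) hg x using 1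
    rw [← mul_assoc, ← ENNReal.ofReal_ofNat 6, ← ENNReal.ofReal_ofNat 2,
      ← ENNReal.ofReal_mul (by norm_num), ← ENNReal.ofReal_mul (by norm_num)]
    ring_nf
  have hv0 (x : ℝ) : v x ≠ 0 := by
    refine (lt_of_lt_of_le ?_ (pow_mul_iterate_le_rubioDeFrancia maximal₂ K g 1 x)).ne'
    simpa [hKt, ENNReal.mul_eq_top] using maximal₂_pos hg0 x
  have hvt : ∀ᵐ x, v x ≠ ⊤ := by
    have hint : ∫⁻ x, v x ^ q ≠ ⊤ := by
      intro h
      refine (hvq.trans_lt (ENNReal.mul_lt_top (by simp) hgq.lt_top)).ne ?_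
      simp [eLpNorm'_eq_lintegral_enorm, h, (by linarith : 0 < q)]
    filter_upwards [ae_lt_top (hvm.pow_const q) hint] with x hx
    exact (ENNReal.rpow_lt_top_iff_of_pos (by linarith)).mp hx |>.ne
  set w : ℝ → ℝ≥0∞ := fun x => if v x = ⊤ then 1 else v x
  have hwv : w =ᵐ[volume] v := by
    filter_upwards [hvt] with x hx
    simp [w, hx]
  refine ⟨w, Measurable.ite (measurableSet_eq_fun hvm measurable_const) measurable_const hvm,
    fun x => ?_, fun x => ?_, ?_, ?_, hvA.congr_ae hwv⟩
  · by_cases hx : v x = ⊤ <;> simp [w, hx, hv0]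
  · by_cases hx : v x = ⊤ <;> simp [w, hx]
  · filter_upwards [hwv] with x hx
    exact hx ▸ le_rubioDeFrancia maximal₂ K g x
  · rwa [eLpNorm'_congr_ae hwv]

/-- Extrapolation from `L^s(w)`, `w ∈ A_1`, to `L^p` by duality: the dual function of `F ^ s` in
`L^q`, `q = (p / s)'`, is dominated by a Rubio de Francia weight. -/
theorem lintegral_rpow_le_of_forall_isA1Weight {F G : ℝ → ℝ≥0∞} {s p : ℝ} {B : ℝ≥0∞}
    (hs : 0 < s) (hsp : 2 * s ≤ p) (hF : ∫⁻ x, F x ^ p ≠ ⊤)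
    (hw : ∀ w : ℝ → ℝ≥0∞, Measurable w → (∀ x, w x ≠ 0) → (∀ x, w x ≠ ⊤) →
      IsA1Weight (ENNReal.ofReal (3072 * p / s)) w →
      ∫⁻ x, F x ^ s * w x ≤ B * ∫⁻ x, G x ^ s * w x) :
    (∫⁻ x, F x ^ p) ^ (s / p) ≤ 2 * B * (∫⁻ x, G x ^ p) ^ (s / p) := by
  set I := ∫⁻ x, F x ^ p
  have hp : 0 < p := by linarith
  rcases eq_or_ne I 0 with hI0 | hI0
  · rw [hI0, ENNReal.zero_rpow_of_pos (by positivity)]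
    exact bot_le
  have hr : 2 ≤ p / s := (le_div_iff₀ hs).mpr hsp
  set q := (p / s).conjExponent
  have hpq : (p / s).HolderConjugate q := .conjExponent (by linarith)
  have hq1 : 1 < q := hpq.symm.lt
  have hexp : s / p + 1 / q = 1 := by
    simpa [inv_div, one_div] using hpq.inv_add_inv_eq_one
  have hΛ : ENNReal.ofReal (3072 / (q - 1)) ≤ ENNReal.ofReal (3072 * p / s) := by
    refine ENNReal.ofReal_le_ofReal ?_
    have := conjExponent_sub_one_mul (by linarith : 1 < p / s)
    rw [div_le_iff₀ (by linarith), mul_div_assoc]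
    nlinarith
  obtain ⟨g, hgm, hg0, hg_norm, hIg⟩ := exists_norming_function (μ := volume) F hs hpq hI0
  obtain ⟨w, hwm, hw0, hwt, hgw, hw_norm, hwA⟩ :=
    exists_isA1Weight hq1 (conjExponent_le_two hr) hgm hg0
    (by rw [hg_norm]; exact ENNReal.rpow_ne_top_of_nonneg (by positivity) hF)
  have hlower : I ≤ ∫⁻ x, F x ^ s * w x :=
    hIg.trans (lintegral_mono_ae (hgw.mono fun x hx => by gcongr))
  have hupper : ∫⁻ x, G x ^ s * w x ≤ (∫⁻ x, G x ^ p) ^ (s / p) * (2 * I ^ (1 / q)) := by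
    refine (lintegral_mul_le_eLpNorm'_mul_eLpNorm' hpq _ hwm hwt).trans ?_
    gcongr
    · simp only [eLpNorm'_eq_lintegral_enorm, enorm_eq_self, one_div_div]
      simp_rw [← ENNReal.rpow_mul, mul_div_cancel₀ _ hs.ne']
      exact le_rfl
    · exact hw_norm.trans_eq (by rw [hg_norm])
  refine rpow_le_of_le_mul_rpow hexp hI0 hF ?_
  calc I ≤ B * ((∫⁻ x, G x ^ p) ^ (s / p) * (2 * I ^ (1 / q))) :=
        hlower.trans ((hw w hwm hw0 hwt (hwA.mono hΛ)).trans (by gcongr))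
    _ = 2 * B * (∫⁻ x, G x ^ p) ^ (s / p) * I ^ (1 / q) := by ring

lemma weightedNorm_toReal {p : ℝ} {w : ℝ → ℝ≥0∞} (hw : ∀ x, w x ≠ ⊤) (f : ℝ → ℂ) :
    weightedNorm p (fun x => (w x).toReal) f = (∫⁻ x, ‖f x‖ₑ ^ p * w x) ^ (1 / p) := by
  simp [weightedNorm, ENNReal.ofReal_toReal (hw _), enorm_eq_nnnorm]

lemma eLpNorm_ofReal_eq {p : ℝ} (hp : 0 < p) (f : ℝ → ℂ) :
    eLpNorm f (ENNReal.ofReal p) volume = (∫⁻ x, ‖f x‖ₑ ^ p) ^ (1 / p) := by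
  rw [eLpNorm_eq_lintegral_rpow_enorm_toReal (by simpa) ENNReal.ofReal_ne_top,
    ENNReal.toReal_ofReal hp.le]

lemma lintegral_enorm_rpow_mul_le_of_isA1Weight {s C β : ℝ} (hs : 2 < s) (hβ : 0 ≤ β)
    {u v : ℝ → ℂ}
    (huv : ∀ w : ℝ → ℝ, (∀ x, 0 < w x) → Measurable w → muckenhouptConst (s / 2) w ≠ ⊤ →
      weightedNorm s w u ≤
        ENNReal.ofReal C * muckenhouptConst (s / 2) w ^ β * weightedNorm s w v)
    {Λ : ℝ≥0∞} (hΛ : Λ ≠ ⊤) {w : ℝ → ℝ≥0∞} (hwm : Measurable w) (hw0 : ∀ x, w x ≠ 0)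
    (hwt : ∀ x, w x ≠ ⊤) (hwA : IsA1Weight Λ w) :
    ∫⁻ x, ‖u x‖ₑ ^ s * w x ≤ (ENNReal.ofReal C * Λ ^ β) ^ s * ∫⁻ x, ‖v x‖ₑ ^ s * w x := by
  have hs0 : 0 < s := by linarith
  have hw_pos (x : ℝ) : 0 < (w x).toReal := ENNReal.toReal_pos (hw0 x) (hwt x)
  have hmuck : muckenhouptConst (s / 2) (fun x => (w x).toReal) ≤ Λ :=
    muckenhouptConst_le (by linarith) hw_pos (by simpa [ENNReal.ofReal_toReal (hwt _)] using hwA)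
  have := huv _ hw_pos hwm.ennreal_toReal (ne_top_of_le_ne_top hΛ hmuck)
  rw [weightedNorm_toReal hwt, weightedNorm_toReal hwt, one_div, ENNReal.rpow_inv_le_iff hs0,
    ENNReal.mul_rpow_of_nonneg _ _ hs0.le, ← ENNReal.rpow_mul, inv_mul_cancel₀ hs0.ne',
    ENNReal.rpow_one] at this
  exact this.trans (by gcongr)

theorem eLpNorm_le_of_forall_weightedNorm_le {s p C β : ℝ} (hs : 2 < s) (hsp : 2 * s ≤ p)
    (hC : 0 ≤ C) (hβ : 0 ≤ β) {u v : ℝ → ℂ}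
    (huv : ∀ w : ℝ → ℝ, (∀ x, 0 < w x) → Measurable w → muckenhouptConst (s / 2) w ≠ ⊤ →
      weightedNorm s w u ≤
        ENNReal.ofReal C * muckenhouptConst (s / 2) w ^ β * weightedNorm s w v)
    (hu : eLpNorm u (ENNReal.ofReal p) volume ≠ ⊤) :
    eLpNorm u (ENNReal.ofReal p) volume ≤
      ENNReal.ofReal (2 * C * (3072 * p / s) ^ β) * eLpNorm v (ENNReal.ofReal p) volume := by
  have hs0 : 0 < s := by linarith
  have hp : 0 < p := by linarith
  set Λ := ENNReal.ofReal (3072 * p / s)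
  have hu' : ∫⁻ x, ‖u x‖ₑ ^ p ≠ ⊤ := by
    rw [eLpNorm_ofReal_eq hp] at hu
    exact fun h => hu (by simp [h, hp])
  have key := lintegral_rpow_le_of_forall_isA1Weight hs0 hsp hu' fun w hwm hw0 hwt hwA =>
    lintegral_enorm_rpow_mul_le_of_isA1Weight hs hβ huv ENNReal.ofReal_ne_top hwm hw0 hwt hwA
  rw [eLpNorm_ofReal_eq hp, eLpNorm_ofReal_eq hp]
  calc (∫⁻ x, ‖u x‖ₑ ^ p) ^ (1 / p) = ((∫⁻ x, ‖u x‖ₑ ^ p) ^ (s / p)) ^ (1 / s) := by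
        rw [← ENNReal.rpow_mul]
        field_simp
    _ ≤ (2 * (ENNReal.ofReal C * Λ ^ β) ^ s * (∫⁻ x, ‖v x‖ₑ ^ p) ^ (s / p)) ^ (1 / s) := by
        gcongr
    _ = 2 ^ (1 / s) * (ENNReal.ofReal C * Λ ^ β) * (∫⁻ x, ‖v x‖ₑ ^ p) ^ (1 / p) := by
        rw [ENNReal.mul_rpow_of_nonneg _ _ (by positivity), ENNReal.mul_rpow_of_nonneg _ _
          (by positivity), ← ENNReal.rpow_mul, ← ENNReal.rpow_mul, mul_one_div_cancel hs0.ne',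
          ENNReal.rpow_one]
        field_simp
    _ ≤ 2 * (ENNReal.ofReal C * Λ ^ β) * (∫⁻ x, ‖v x‖ₑ ^ p) ^ (1 / p) := by
        gcongr
        calc (2 : ℝ≥0∞) ^ (1 / s) ≤ 2 ^ (1 : ℝ) :=
              ENNReal.rpow_le_rpow_of_exponent_le (by norm_num) ((div_le_one hs0).mpr (by linarith))
          _ = 2 := ENNReal.rpow_one 2
    _ = _ := by
        rw [ENNReal.ofReal_rpow_of_nonneg (by positivity) hβ, ← ENNReal.ofReal_mul hC,
          ← ENNReal.ofReal_ofNat 2, ← ENNReal.ofReal_mul zero_le_two, mul_assoc 2 C]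

lemma eventually_mul_rpow_lt_mul {β c : ℝ} (hβ : β < 1) (hc : 0 < c) (A : ℝ) {k : ℝ}
    (hk : 0 ≤ k) : ∀ᶠ p in atTop, A * (k * p) ^ β < c * p := by
  have hlim : Tendsto (fun p : ℝ => A * k ^ β * p ^ (β - 1)) atTop (𝓝 0) := by
    simpa [neg_sub] using (tendsto_rpow_neg_atTop (by linarith : 0 < 1 - β)).const_mul (A * k ^ β)
  filter_upwards [hlim.eventually (gt_mem_nhds hc), eventually_gt_atTop 0] with p hp hp0
  calc A * (k * p) ^ β = A * k ^ β * p ^ (β - 1) * p := by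
        rw [Real.mul_rpow hk hp0.le, Real.rpow_sub_one hp0.ne', mul_assoc,
          div_mul_cancel₀ _ hp0.ne', mul_assoc]
    _ < c * p := by gcongr

/-- Sharpness via unweighted growth (Frey–Nieraeth / Luque–Pérez–Rela): if `T` is bounded
on `L^p` for all `p > 2`, the unweighted norms grow at least linearly
(`‖T‖_{L^p→L^p} ≥ c p` for large `p`), and `T` satisfies the weighted bound
`‖T‖_{L^s(w)} ≤ C [w]_{A_{s/2}}^β` for all `w ∈ A_{s/2}`, then `β ≥ 1`. -/
theorem weighted_exponent_lower_bound
    (s : ℝ) (hs : 2 < s) (T : (ℝ → ℂ) → ℝ → ℂ) (β : ℝ) (hβ : 0 ≤ β)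
    (C : ℝ) (hC : 0 < C) (c P0 : ℝ) (hc : 0 < c)
    (hbdd : ∀ p : ℝ, 2 < p → ∃ Cp : ℝ, ∀ f : ℝ → ℂ,
      eLpNorm (T f) (ENNReal.ofReal p) volume
        ≤ ENNReal.ofReal Cp * eLpNorm f (ENNReal.ofReal p) volume)
    (hlow : ∀ p : ℝ, P0 ≤ p → ∀ C' : ℝ,
      (∀ f : ℝ → ℂ, eLpNorm (T f) (ENNReal.ofReal p) volume
        ≤ ENNReal.ofReal C' * eLpNorm f (ENNReal.ofReal p) volume) → c * p ≤ C')
    (hup : ∀ w : ℝ → ℝ, (∀ x, 0 < w x) → Measurable w → muckenhouptConst (s / 2) w ≠ ⊤ →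
      ∀ f : ℝ → ℂ, weightedNorm s w (T f)
        ≤ ENNReal.ofReal C * muckenhouptConst (s / 2) w ^ β * weightedNorm s w f) :
    1 ≤ β := by
  by_contra! hβ1
  obtain ⟨p, hpP0, hsp, hlt⟩ : ∃ p, P0 ≤ p ∧ 2 * s ≤ p ∧ 2 * C * (3072 / s * p) ^ β < c * p :=
    ((eventually_ge_atTop P0).and ((eventually_ge_atTop (2 * s)).and
      (eventually_mul_rpow_lt_mul hβ1 hc (2 * C) (div_nonneg (by norm_num) (by linarith))))).exists
  have hT : ∀ f, eLpNorm (T f) (ENNReal.ofReal p) volume ≤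
      ENNReal.ofReal (2 * C * (3072 * p / s) ^ β) * eLpNorm f (ENNReal.ofReal p) volume := by
    intro f
    rcases eq_or_ne (eLpNorm f (ENNReal.ofReal p) volume) ⊤ with hf | hf
    · have hΛ : 0 < 3072 * p / s := div_pos (by linarith) (by linarith)
      have hK : 0 < 2 * C * (3072 * p / s) ^ β := by positivity
      rw [hf, ENNReal.mul_top (by simpa using hK)]
      exact le_top
    obtain ⟨Cp, hCp⟩ := hbdd p (by linarith)
    exact eLpNorm_le_of_forall_weightedNorm_le hs hsp hC.le hβ (fun w h₁ h₂ h₃ => hup w h₁ h₂ h₃ f)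
      (ne_top_of_le_ne_top (ENNReal.mul_ne_top ENNReal.ofReal_ne_top hf) (hCp f))
  have := hlow p hpP0 _ hT
  rw [mul_div_right_comm] at this
  linarith
end

section
/- Let $T$ be the square function associated with the family of unit intervals $\omega_k = [k, k+1]$, $k\in\mathbb{Z}$: $Tf = (\sum_k |f*\check{\mathbf{1}}_{[k,k+1]}|^2)^{1/2}$. Then $T$ is not bounded on $L^p(\mathbb{R})$ for any $1 < p < 2$; i.e., there is no constant $C$ with $\|Tf\|_p \le C\|f\|_p$ for all Schwartz $f$. -/
/-!
Take `f_m` with `𝓕 f_m (ξ) = β (ξ / m)`, where the bump `β` is `1` on `[1, 3]` and vanishes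
outside `(0, 4)`. On each of the `m` intervals `[k, k + 1] ⊆ [m, 2m]` the symbol is `1`, and
translating an interval only multiplies `∫ e^{2πiξx} dξ` by a unimodular phase, so
`T f_m x ≥ √m · |∫₀¹ e^{2πiξx} dξ|` and `‖T f_m‖_p ≳ m^{1/2}`. Dilation gives
`f_m x = m f_1 (m x)`, hence `‖f_m‖_p = m^{1 - 1/p} ‖f_1‖_p`, and `1 - 1/p < 1/2` for `p < 2`.
-/

open MeasureTheory Real Set FourierTransform Filter Topology
open scoped ENNReal ContDiff

noncomputable section

namespace UnitIntervalSquareFunction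

def squareFunction (ψ : ℝ → ℂ) (x : ℝ) : ℝ :=
  √(∑' k : ℤ, ‖∫ ξ in Icc (k : ℝ) ((k : ℝ) + 1),
    ψ ξ * Complex.exp (2 * (π : ℂ) * Complex.I * (ξ : ℂ) * (x : ℂ))‖ ^ 2)

def unitIntervalProfile (x : ℝ) : ℝ :=
  ‖∫ ξ in (0 : ℝ)..1, Complex.exp (2 * (π : ℂ) * Complex.I * (ξ : ℂ) * (x : ℂ))‖

lemma continuous_unitIntervalProfile : Continuous unitIntervalProfile := by
  unfold unitIntervalProfile
  fun_prop

lemma unitIntervalProfile_nonneg (x : ℝ) : 0 ≤ unitIntervalProfile x := norm_nonneg _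

lemma unitIntervalProfile_zero : unitIntervalProfile 0 = 1 := by
  simp [unitIntervalProfile]

lemma eLpNorm_unitIntervalProfile_ne_zero {p : ℝ≥0∞} (hp : p ≠ 0) :
    eLpNorm unitIntervalProfile p volume ≠ 0 := by
  rw [Ne, eLpNorm_eq_zero_iff continuous_unitIntervalProfile.aestronglyMeasurable hp]
  intro h
  have h0 :=
    congrFun ((continuous_unitIntervalProfile.ae_eq_iff_eq volume continuous_zero).1 h) 0
  simp [unitIntervalProfile_zero] at h0

lemma norm_integral_Icc_exp (a x : ℝ) :
    ‖∫ ξ in Icc a (a + 1), Complex.exp (2 * (π : ℂ) * Complex.I * (ξ : ℂ) * (x : ℂ))‖ =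
      unitIntervalProfile x := by
  have htranslate := intervalIntegral.integral_comp_add_right
    (fun ξ : ℝ => Complex.exp (2 * (π : ℂ) * Complex.I * (ξ : ℂ) * (x : ℂ))) (a := 0) (b := 1) a
  rw [zero_add, add_comm 1 a] at htranslate
  rw [integral_Icc_eq_integral_Ioc, ← intervalIntegral.integral_of_le (by linarith), ← htranslate]
  simp only [Complex.ofReal_add, mul_add, add_mul, Complex.exp_add,
    intervalIntegral.integral_mul_const, norm_mul, Complex.norm_exp]
  simp [unitIntervalProfile]

lemma norm_integral_Icc_mul_exp_of_eqOn_one {ψ : ℝ → ℂ} {a : ℝ} (h : EqOn ψ 1 (Icc a (a + 1)))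
    (x : ℝ) :
    ‖∫ ξ in Icc a (a + 1), ψ ξ * Complex.exp (2 * (π : ℂ) * Complex.I * (ξ : ℂ) * (x : ℂ))‖ =
      unitIntervalProfile x := by
  rw [setIntegral_congr_fun measurableSet_Icc fun ξ hξ => by rw [h hξ, Pi.one_apply, one_mul],
    norm_integral_Icc_exp]

lemma integral_Icc_mul_exp_of_eqOn_zero {ψ : ℝ → ℂ} {a : ℝ} (h : EqOn ψ 0 (Icc a (a + 1)))
    (x : ℝ) :
    ∫ ξ in Icc a (a + 1), ψ ξ * Complex.exp (2 * (π : ℂ) * Complex.I * (ξ : ℂ) * (x : ℂ)) = 0 := by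
  rw [setIntegral_congr_fun measurableSet_Icc fun ξ hξ => by rw [h hξ, Pi.zero_apply, zero_mul],
    integral_zero]

lemma sqrt_card_mul_unitIntervalProfile_le_squareFunction {ψ : ℝ → ℂ} (s t : Finset ℤ)
    (hs : ∀ k ∈ s, EqOn ψ 1 (Icc (k : ℝ) (k + 1))) (ht : ∀ k ∉ t, EqOn ψ 0 (Icc (k : ℝ) (k + 1)))
    (x : ℝ) : √(s.card) * unitIntervalProfile x ≤ squareFunction ψ x := by
  set F : ℤ → ℝ := fun k => ‖∫ ξ in Icc (k : ℝ) ((k : ℝ) + 1),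
    ψ ξ * Complex.exp (2 * (π : ℂ) * Complex.I * (ξ : ℂ) * (x : ℂ))‖ ^ 2
  have hF : Summable F := summable_of_ne_finset_zero (s := t) fun k hk => by
    simp [F, integral_Icc_mul_exp_of_eqOn_zero (ht k hk)]
  calc √(s.card) * unitIntervalProfile x = √(∑ k ∈ s, unitIntervalProfile x ^ 2) := by
        rw [Finset.sum_const, nsmul_eq_mul, sqrt_mul (Nat.cast_nonneg _),
          sqrt_sq (unitIntervalProfile_nonneg x)]
    _ = √(∑ k ∈ s, F k) := by
        congr 1
        refine Finset.sum_congr rfl fun k hk => ?_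
        simp only [F, norm_integral_Icc_mul_exp_of_eqOn_one (hs k hk)]
    _ ≤ squareFunction ψ x := sqrt_le_sqrt (hF.sum_le_tsum s fun k _ => sq_nonneg _)

def bump : ContDiffBump (2 : ℝ) := ⟨1, 2, one_pos, one_lt_two⟩

lemma bump_eq_one {ξ : ℝ} (h : ξ ∈ Icc 1 3) : bump ξ = 1 :=
  bump.one_of_mem_closedBall (by rw [Real.closedBall_eq_Icc]; convert h using 2 <;> norm_num [bump])

lemma bump_eq_zero {ξ : ℝ} (h : ξ ∉ Ioo 0 4) : bump ξ = 0 := by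
  refine bump.zero_of_le_dist ?_
  rw [Real.dist_eq]
  simp only [mem_Ioo, not_and_or, not_lt] at h
  show 2 ≤ |ξ - 2|
  rcases h with h | h
  · rw [abs_of_neg (by linarith)]; linarith
  · rw [abs_of_pos (by linarith)]; linarith

def testSymbol (t ξ : ℝ) : ℂ := bump (ξ / t)

lemma contDiff_testSymbol (t : ℝ) : ContDiff ℝ ∞ (testSymbol t) :=
  Complex.ofRealCLM.contDiff.comp (bump.contDiff.comp (contDiff_id.div_const t))

lemma hasCompactSupport_testSymbol (t : ℝ) : HasCompactSupport (testSymbol t) := by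
  refine HasCompactSupport.intro (isCompact_closedBall 0 (4 * |t|)) fun ξ hξ => ?_
  rw [testSymbol, bump_eq_zero, Complex.ofReal_zero]
  rintro ⟨hpos, hlt⟩
  have ht : t ≠ 0 := by rintro rfl; simp at hpos
  refine hξ (mem_closedBall_zero_iff.2 ?_)
  calc ‖ξ‖ = |t| * |ξ / t| := by rw [Real.norm_eq_abs, ← abs_mul, mul_div_cancel₀ _ ht]
    _ ≤ 4 * |t| := by rw [mul_comm, abs_of_pos hpos]; gcongr

lemma testSymbol_eqOn_one (m : ℕ) : ∀ k ∈ Finset.Ico (m : ℤ) (2 * m),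
    EqOn (testSymbol m) 1 (Icc (k : ℝ) (k + 1)) := by
  intro k hk ξ hξ
  rw [Finset.mem_Ico] at hk
  have hm : (0 : ℝ) < m := by exact_mod_cast (show (0 : ℤ) < m by omega)
  have hmk : (m : ℝ) ≤ k := by exact_mod_cast hk.1
  have hkm : (k : ℝ) + 1 ≤ 2 * m := by exact_mod_cast (show k + 1 ≤ 2 * (m : ℤ) by omega)
  rw [testSymbol, bump_eq_one, Complex.ofReal_one, Pi.one_apply]
  constructor
  · rw [le_div_iff₀ hm]; linarith [hξ.1]
  · rw [div_le_iff₀ hm]; linarith [hξ.2]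

lemma testSymbol_eqOn_zero (m : ℕ) : ∀ k ∉ Finset.Ico (0 : ℤ) (4 * m),
    EqOn (testSymbol m) 0 (Icc (k : ℝ) (k + 1)) := by
  intro k hk ξ hξ
  rw [Finset.mem_Ico, not_and_or, not_le, not_lt] at hk
  rw [testSymbol, bump_eq_zero, Complex.ofReal_zero, Pi.zero_apply]
  rintro ⟨hpos, hlt⟩
  have hm : (0 : ℝ) < m := Nat.cast_pos.2 (Nat.pos_of_ne_zero fun h => by simp [h] at hpos)
  rw [lt_div_iff₀ hm, zero_mul] at hpos
  rw [div_lt_iff₀ hm] at hlt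
  rcases hk with hk | hk
  · have : (k : ℝ) + 1 ≤ 0 := by exact_mod_cast (show k + 1 ≤ 0 by omega)
    linarith [hξ.2]
  · have : 4 * (m : ℝ) ≤ k := by exact_mod_cast hk
    linarith [hξ.1]

lemma fourierInv_comp_div {E : Type*} [NormedAddCommGroup E] [NormedSpace ℂ E] (g : ℝ → E)
    {t : ℝ} (ht : t ≠ 0) (x : ℝ) : 𝓕⁻ (fun ξ => g (ξ / t)) x = |t| • 𝓕⁻ g (t * x) := by
  rw [Real.fourierInv_eq', Real.fourierInv_eq', ← Measure.integral_comp_div _ t]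
  congr 1 with ξ
  simp only [RCLike.inner_apply, conj_trivial]
  rw [mul_div_assoc', mul_assoc t, mul_div_cancel_left₀ _ ht]

lemma eLpNorm_comp_mul_left {F : Type*} [NormedAddCommGroup F] {f : ℝ → F}
    (hf : AEStronglyMeasurable f volume) {a : ℝ} (ha : a ≠ 0) {p : ℝ≥0∞} (hp : p ≠ ⊤) :
    eLpNorm (fun x => f (a * x)) p volume =
      ENNReal.ofReal |a⁻¹| ^ (1 / p).toReal * eLpNorm f p volume := by
  have hmap := Real.map_volume_mul_left ha
  rw [← Function.comp_def, ← eLpNorm_map_measure (by rw [hmap]; exact hf.smul_measure _)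
    (measurable_const_mul a).aemeasurable, hmap, eLpNorm_smul_measure_of_ne_top hp, smul_eq_mul]

def testFunction (t : ℝ) : SchwartzMap ℝ ℂ :=
  𝓕⁻ ((hasCompactSupport_testSymbol t).toSchwartzMap (contDiff_testSymbol t))

lemma fourier_testFunction (t : ℝ) : 𝓕 ⇑(testFunction t) = testSymbol t := by
  rw [← SchwartzMap.fourier_coe, testFunction, FourierInvPair.fourier_fourierInv_eq]
  rfl

lemma testFunction_apply {t : ℝ} (ht : t ≠ 0) (x : ℝ) :
    testFunction t x = |t| * testFunction 1 (t * x) := by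
  simp only [testFunction, SchwartzMap.fourierInv_coe]
  change 𝓕⁻ (testSymbol t) x = |t| * 𝓕⁻ (testSymbol 1) (t * x)
  have hsymbol : testSymbol t = fun ξ => testSymbol 1 (ξ / t) := by
    ext ξ; simp [testSymbol]
  rw [hsymbol, fourierInv_comp_div _ ht, Complex.real_smul]

lemma eLpNorm_testFunction {p : ℝ} (hp : 0 < p) {t : ℝ} (ht : 0 < t) :
    eLpNorm (testFunction t) (ENNReal.ofReal p) volume =
      ENNReal.ofReal (t ^ (1 - 1 / p)) * eLpNorm (testFunction 1) (ENNReal.ofReal p) volume := by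
  have hdilate : ⇑(testFunction t) = ((|t| : ℝ) : ℂ) • fun x => testFunction 1 (t * x) := by
    ext x; rw [testFunction_apply ht.ne']; rfl
  rw [hdilate, eLpNorm_const_smul,
    eLpNorm_comp_mul_left (testFunction 1).continuous.aestronglyMeasurable ht.ne'
      ENNReal.ofReal_ne_top, ← mul_assoc, one_div, ENNReal.toReal_inv,
    ENNReal.toReal_ofReal hp.le, abs_of_pos ht, abs_of_pos (inv_pos.2 ht),
    ENNReal.ofReal_rpow_of_nonneg (inv_nonneg.2 ht.le) (by positivity)]
  congr 1
  rw [← ofReal_norm, Complex.norm_real, norm_of_nonneg ht.le, ← ENNReal.ofReal_mul ht.le,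
    inv_rpow ht.le, rpow_sub ht, rpow_one, one_div, div_eq_mul_inv]

lemma sqrt_mul_eLpNorm_unitIntervalProfile_le (m : ℕ) (p : ℝ≥0∞) :
    ENNReal.ofReal √m * eLpNorm unitIntervalProfile p volume ≤
      eLpNorm (squareFunction (𝓕 ⇑(testFunction m))) p volume := by
  rw [← abs_of_nonneg (sqrt_nonneg m), ← Real.enorm_eq_ofReal_abs, ← eLpNorm_const_smul]
  refine eLpNorm_mono_real fun x => ?_
  rw [Pi.smul_apply, smul_eq_mul,
    norm_of_nonneg (mul_nonneg (sqrt_nonneg _) (unitIntervalProfile_nonneg x)),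
    fourier_testFunction]
  have hcard : (Finset.Ico (m : ℤ) (2 * m)).card = m := by rw [Int.card_Ico]; omega
  simpa [hcard] using sqrt_card_mul_unitIntervalProfile_le_squareFunction _ _
    (testSymbol_eqOn_one m) (testSymbol_eqOn_zero m) x

lemma eq_zero_of_forall_rpow_mul_le_mul_rpow {E K : ℝ≥0∞} (hK : K ≠ ⊤) {a b : ℝ} (hba : b < a)
    (h : ∀ n : ℕ, 0 < n → ENNReal.ofReal ((n : ℝ) ^ a) * E ≤ K * ENNReal.ofReal ((n : ℝ) ^ b)) :
    E = 0 := by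
  have hbound : ∀ n : ℕ, 0 < n → E ≤ K * ENNReal.ofReal ((n : ℝ) ^ (b - a)) := by
    intro n hn
    have hn' : (0 : ℝ) < n := Nat.cast_pos.2 hn
    refine (ENNReal.mul_le_mul_iff_right (ENNReal.ofReal_pos.2 (rpow_pos_of_pos hn' a)).ne'
      ENNReal.ofReal_ne_top).1 ?_
    calc ENNReal.ofReal ((n : ℝ) ^ a) * E ≤ K * ENNReal.ofReal ((n : ℝ) ^ b) := h n hn
      _ = ENNReal.ofReal ((n : ℝ) ^ a) * (K * ENNReal.ofReal ((n : ℝ) ^ (b - a))) := by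
        rw [mul_left_comm, ← ENNReal.ofReal_mul (rpow_nonneg hn'.le _), ← rpow_add hn',
          add_sub_cancel]
  have hlim : Tendsto (fun n : ℕ => K * ENNReal.ofReal ((n : ℝ) ^ (b - a))) atTop (𝓝 0) := by
    have hpow : Tendsto (fun n : ℕ => (n : ℝ) ^ (b - a)) atTop (𝓝 0) := by
      have := (tendsto_rpow_neg_atTop (sub_pos.2 hba)).comp tendsto_natCast_atTop_atTop
      rwa [neg_sub] at this
    simpa using ENNReal.Tendsto.const_mul (ENNReal.tendsto_ofReal hpow) (Or.inr hK)
  exact nonpos_iff_eq_zero.1 <| ge_of_tendsto hlim <|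
    (eventually_gt_atTop 0).mono fun n hn => hbound n hn

end UnitIntervalSquareFunction

end

open UnitIntervalSquareFunction in
/-- The square function associated with the unit intervals `ωₖ = [k, k+1]`, `k ∈ ℤ`,
is unbounded on `L^p(ℝ)` for every `1 < p < 2`: there is no constant `C` with
`‖Tf‖_p ≤ C ‖f‖_p` for all Schwartz `f`. Here `f ∗ 1̌_{[k,k+1]}` is realized as
`x ↦ ∫_{[k,k+1]} 𝓕f(ξ) e^{2πixξ} dξ`. -/
theorem unit_interval_square_function_unbounded_below_two
    (p : ℝ) (hp1 : 1 < p) (hp2 : p < 2) :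
    ¬ ∃ C : ℝ, ∀ f : SchwartzMap ℝ ℂ,
      eLpNorm (fun x : ℝ => Real.sqrt (∑' k : ℤ,
          ‖∫ ξ in Set.Icc (k : ℝ) ((k : ℝ) + 1),
            FourierTransform.fourier (⇑f : ℝ → ℂ) ξ *
              Complex.exp (2 * (Real.pi : ℂ) * Complex.I * (ξ : ℂ) * (x : ℂ))‖ ^ 2))
          (ENNReal.ofReal p) volume
        ≤ ENNReal.ofReal C * eLpNorm (⇑f) (ENNReal.ofReal p) volume := by
  rintro ⟨C, hC⟩
  replace hC : ∀ f : SchwartzMap ℝ ℂ, eLpNorm (squareFunction (𝓕 ⇑f)) (.ofReal p) volume ≤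
      ENNReal.ofReal C * eLpNorm f (.ofReal p) volume := hC
  have hp : 0 < p := by linarith
  have hexponent : 1 - 1 / p < 1 / 2 := by
    have : 1 / 2 < 1 / p := one_div_lt_one_div_of_lt hp hp2
    linarith
  set G := eLpNorm (testFunction 1) (.ofReal p) volume
  have hG : G ≠ ⊤ := ((testFunction 1).memLp _ volume).eLpNorm_ne_top
  refine eLpNorm_unitIntervalProfile_ne_zero (p := .ofReal p) (by simpa using hp) <|
    eq_zero_of_forall_rpow_mul_le_mul_rpow (K := ENNReal.ofReal C * G)
      (ENNReal.mul_ne_top ENNReal.ofReal_ne_top hG) hexponent fun m hm => ?_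
  calc ENNReal.ofReal ((m : ℝ) ^ (1 / 2 : ℝ)) * eLpNorm unitIntervalProfile (.ofReal p) volume
      = ENNReal.ofReal √m * eLpNorm unitIntervalProfile (.ofReal p) volume := by
        rw [sqrt_eq_rpow]
    _ ≤ eLpNorm (squareFunction (𝓕 ⇑(testFunction m))) (.ofReal p) volume :=
        sqrt_mul_eLpNorm_unitIntervalProfile_le m _
    _ ≤ ENNReal.ofReal C * eLpNorm (testFunction m) (.ofReal p) volume := hC _
    _ = ENNReal.ofReal C * G * ENNReal.ofReal ((m : ℝ) ^ (1 - 1 / p)) := by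
        rw [eLpNorm_testFunction hp (Nat.cast_pos.2 hm)]
        ring
end
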